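/- arXiv:2203.03261 — 8 statements merged into one kernel-verified Lean document; each statement's English description precedes it below -/
import Mathlib

section
/- Assume ε satisfies the composition conditions. Let 𝒬_1 ≠ 𝒬_2 be quadrilaterals in F with oriented triangles T_1, T_2 and distinguished points P_1, P_2. Then ε_{P_1 R_1} = ε_{P_2 R_2} for all R_1 ∈ T_1 and all R_2 ∈ T_2. -/
open Finset

/-- The ambient `𝔽₂`-vector space (the Fano cube); the Fano plane `F` is its set of
nonzero vectors. -/
abbrev V : Type := Fin 3 → ZMod 2

/-- A multiplication factor: a sign `ε P Q ∈ {−1,1}` for each ordered pair `(P,Q)` of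
distinct points of the Fano plane with `ε Q P = −ε P Q`, normalised to `0` outside its
domain of definition. -/
def IsMulFactor (ε : V → V → ℤ) : Prop :=
  (∀ P Q : V, P ≠ 0 → Q ≠ 0 → P ≠ Q → (ε P Q = 1 ∨ ε P Q = -1) ∧ ε Q P = -ε P Q) ∧
  (∀ P Q : V, P = 0 ∨ Q = 0 ∨ P = Q → ε P Q = 0)

/-- A norm on the Fano plane: a map to `{−1,1}` multiplicative on pairs of distinct points. -/
def IsNorm (N : V → ℤ) : Prop :=
  (∀ P : V, P ≠ 0 → N P = 1 ∨ N P = -1) ∧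
  (∀ P Q : V, P ≠ 0 → Q ≠ 0 → P ≠ Q → N (P + Q) = N P * N Q)

/-- A line of the Fano plane: a 3-element set `{P,Q,R}` of nonzero vectors with `P+Q+R=0`. -/
def IsLine (L : Set V) : Prop :=
  ∃ P Q R : V, P ≠ 0 ∧ Q ≠ 0 ∧ R ≠ 0 ∧ P ≠ Q ∧ P ≠ R ∧ Q ≠ R ∧
    P + Q + R = 0 ∧ L = {P, Q, R}

/-- A triangle: a 3-element subset of the Fano plane which is not a line. -/
def IsTriangle (T : Set V) : Prop :=
  ∃ P Q R : V, P ≠ 0 ∧ Q ≠ 0 ∧ R ≠ 0 ∧ P ≠ Q ∧ P ≠ R ∧ Q ≠ R ∧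
    P + Q + R ≠ 0 ∧ T = {P, Q, R}

/-- A quadrilateral: a 4-element subset of the Fano plane containing no line. -/
def IsQuad (S : Set V) : Prop :=
  (∃ P Q R T : V, P ≠ 0 ∧ Q ≠ 0 ∧ R ≠ 0 ∧ T ≠ 0 ∧
    P ≠ Q ∧ P ≠ R ∧ P ≠ T ∧ Q ≠ R ∧ Q ≠ T ∧ R ≠ T ∧ S = {P, Q, R, T}) ∧
  (∀ L : Set V, IsLine L → ¬ L ⊆ S)

/-- The future of a point `P`: the points `Q` of the Fano plane with `ε P Q = 1`. -/
def Future (ε : V → V → ℤ) (P : V) : Set V := {Q : V | Q ≠ 0 ∧ Q ≠ P ∧ ε P Q = 1}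

/-- The past of a point `P`: the points `Q` of the Fano plane with `ε P Q = −1`. -/
def Past (ε : V → V → ℤ) (P : V) : Set V := {Q : V | Q ≠ 0 ∧ Q ≠ P ∧ ε P Q = -1}

/-- The composition conditions (C1) and (C2) on a multiplication factor. -/
def CompCond (ε : V → V → ℤ) : Prop :=
  (∀ P Q R : V, P ≠ 0 → Q ≠ 0 → R ≠ 0 → P ≠ Q → P ≠ R → Q ≠ R → P + Q + R = 0 →
    ε P Q * ε Q R = 1) ∧
  (∀ P Q R S : V, P ≠ 0 → Q ≠ 0 → R ≠ 0 → S ≠ 0 →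
    P ≠ Q → P ≠ R → P ≠ S → Q ≠ R → Q ≠ S → R ≠ S → IsQuad {P, Q, R, S} →
    ε P Q * ε Q R * ε R S * ε S P = -1)

/-- An oriented triangle `{P,Q,R}`: one with `ε P Q = ε Q R = ε R P`. -/
def OrientedTri (ε : V → V → ℤ) (T : Set V) : Prop :=
  ∃ P Q R : V, T = {P, Q, R} ∧ P ≠ Q ∧ P ≠ R ∧ Q ≠ R ∧
    ε P Q = ε Q R ∧ ε Q R = ε R P

/-- `P` is the distinguished point of the quadrilateral `S`: the point of `S` whose
complement in `S` is the oriented triangle of `S`. -/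
def IsDistPt (ε : V → V → ℤ) (S : Set V) (P : V) : Prop :=
  P ∈ S ∧ IsTriangle (S \ {P}) ∧ OrientedTri ε (S \ {P})

/-- A family of subsets of the Fano plane satisfies the Fano axioms if two distinct points
lie in exactly one member and two distinct members meet in exactly one point. -/
def FanoFamily (Δ : Set (Set V)) : Prop :=
  (∀ P Q : V, P ≠ 0 → Q ≠ 0 → P ≠ Q → ∃! T, T ∈ Δ ∧ P ∈ T ∧ Q ∈ T) ∧
  (∀ T₁ T₂ : Set V, T₁ ∈ Δ → T₂ ∈ Δ → T₁ ≠ T₂ → ∃! X : V, X ∈ T₁ ∩ T₂)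

/-- An `n`-oriented map: `α_P(P) + n(P) = 1` on the Fano plane and
`α_P(Q) + α_Q(P) = 1` for distinct points; normalised by `α 0 = 0`. -/
def IsNOrientedMap (n : V →ₗ[ZMod 2] ZMod 2) (α : V → V →ₗ[ZMod 2] ZMod 2) : Prop :=
  (∀ P : V, P ≠ 0 → α P P + n P = 1) ∧
  (∀ P Q : V, P ≠ 0 → Q ≠ 0 → P ≠ Q → α P Q + α Q P = 1) ∧
  α 0 = 0

/-- An oriented map is a `0`-oriented map. -/
def IsOrientedMap (α : V → V →ₗ[ZMod 2] ZMod 2) : Prop := IsNOrientedMap 0 α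

/-- The exponential `e : ZMod 2 → {−1,1}`, `e^0 = 1`, `e^1 = −1`. -/
def eSign (x : ZMod 2) : ℤ := if x = 0 then 1 else -1

/-- The multiplication factor `e^α` associated to an (`n`-)oriented map `α`. -/
def expMap (α : V → V →ₗ[ZMod 2] ZMod 2) : V → V → ℤ :=
  fun P Q => if P ≠ 0 ∧ Q ≠ 0 ∧ P ≠ Q then eSign (α P Q) else 0

/-- The set `Δ_P = {Q ∈ F : Q ≠ P, α_P(Q) = 1}` associated to an oriented map. -/
def DeltaSet (α : V → V →ₗ[ZMod 2] ZMod 2) (P : V) : Set V :=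
  {Q : V | Q ≠ 0 ∧ Q ≠ P ∧ α P Q = 1}

/-- The map `α ↦ α′`, `α′_P = α_P + n(P)·n`. -/
def nTransform (n : V →ₗ[ZMod 2] ZMod 2) (α : V → V →ₗ[ZMod 2] ZMod 2) :
    V → V →ₗ[ZMod 2] ZMod 2 :=
  fun P => α P + n P • n

/-- The norm `e^{n}` on the Fano plane associated to a linear form `n`. -/
def NormOf (n : V →ₗ[ZMod 2] ZMod 2) : V → ℤ := fun P => eSign (n P)

/-- Structure constants of the octonion-type multiplication on `O_F` determined by a norm `N`
and a multiplication factor `ε`: `e_0` is a two-sided unit, `e_P ⬝ e_P = −N(P) e_0` and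
`e_P ⬝ e_Q = ε_{PQ} e_{P+Q}` for distinct points `P`, `Q` of the Fano plane. -/
def structC (𝔽 : Type*) [Field 𝔽] (N : V → ℤ) (ε : V → V → ℤ) (P Q : V) : 𝔽 :=
  if P = 0 ∨ Q = 0 then 1
  else if P = Q then -(N P : 𝔽)
  else (ε P Q : 𝔽)

/-- The bilinear multiplication on `O_F = (V → 𝔽)` with the above structure constants
(in `V` we have `X = Y + Z ↔ Z = X + Y`). -/
def octMul (𝔽 : Type*) [Field 𝔽] (N : V → ℤ) (ε : V → V → ℤ) (Z W : V → 𝔽) : V → 𝔽 :=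
  fun X => ∑ Y : V, structC 𝔽 N ε Y (X + Y) * Z Y * W (X + Y)

/-- The quadratic form `N_O` on `O_F`. -/
def octNorm (𝔽 : Type*) [Field 𝔽] (N : V → ℤ) (Z : V → 𝔽) : 𝔽 :=
  ∑ X : V, (if X = 0 then 1 else (N X : 𝔽)) * Z X ^ 2

/-- `(O_F, N, ε)` is a composition algebra: `N_O(Z ⬝ W) = N_O(Z) N_O(W)`. -/
def IsCompAlg (𝔽 : Type*) [Field 𝔽] (N : V → ℤ) (ε : V → V → ℤ) : Prop :=
  ∀ Z W : V → 𝔽, octNorm 𝔽 N (octMul 𝔽 N ε Z W) = octNorm 𝔽 N Z * octNorm 𝔽 N W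

/-!
Call `P` an `s`-apex of `a, b, c` if `P = a + b + c` and `ε P` takes the value `s` at `a`, `b`
and `c`; by (C2) the distinguished point of a quadrilateral is an apex of its oriented triangle.
If `P` is an `s`-apex of `a, b, c`, then (C1) along the lines through `a`, together with (C2) on
`{P, a, b, c}`, makes the vertex `a` an `s`-apex of `b, P + a, P + b` or of `c, P + a, P + c`;
likewise (C2) on `{P, b, P + a, P + c}` makes `P + a` an `s`-apex. Hence one apex of sign `s`
makes every point of the Fano plane an `s`-apex. No point is an apex of both signs: `ε P` takes
the value `-s` exactly at `P + a, P + b, P + c`, whose sum is `0`, not `P`.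
-/

theorem add_add_eq_of_eq_or {M : Type*} [AddCommMonoid M] {x y z u v w : M}
    (hxy : x ≠ y) (hxz : x ≠ z) (hyz : y ≠ z) (hx : x = u ∨ x = v ∨ x = w)
    (hy : y = u ∨ y = v ∨ y = w) (hz : z = u ∨ z = v ∨ z = w) : x + y + z = u + v + w := by
  rcases hx with rfl | rfl | rfl <;> rcases hy with rfl | rfl | rfl <;>
    rcases hz with rfl | rfl | rfl <;> first | contradiction | abel

theorem eq_or_of_triangle {a b c : V} (ha : a ≠ 0) (hb : b ≠ 0) (hc : c ≠ 0) (hab : a ≠ b)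
    (hac : a ≠ c) (hbc : b ≠ c) {P : V} (hP : P = a + b + c) (hP0 : P ≠ 0) (Z : V) :
    Z = 0 ∨ Z = P ∨ Z = a ∨ Z = b ∨ Z = c ∨ Z = P + a ∨ Z = P + b ∨ Z = P + c := by
  have h01 : ∀ x : ZMod 2, x = 0 ∨ x = 1 := by decide
  have hli : LinearIndependent (ZMod 2) ![a, b, c] := by
    rw [Fintype.linearIndependent_iff]
    intro g hg i
    simp only [Fin.sum_univ_three, Matrix.cons_val_zero, Matrix.cons_val_one,
      Matrix.cons_val_two, Matrix.tail_cons, Matrix.head_cons] at hg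
    rcases h01 (g 0) with h0 | h0 <;> rcases h01 (g 1) with h1 | h1 <;>
      rcases h01 (g 2) with h2 | h2 <;>
      simp only [h0, h1, h2, zero_smul, one_smul, zero_add, add_zero] at hg <;>
      first | fin_cases i <;> assumption | grind
  have hZ : Z ∈ Submodule.span (ZMod 2) (Set.range ![a, b, c]) := by
    rw [hli.span_eq_top_of_card_eq_finrank (by simp)]
    exact Submodule.mem_top
  obtain ⟨g, rfl⟩ := (Submodule.mem_span_range_iff_exists_fun (ZMod 2)).1 hZ
  simp only [Fin.sum_univ_three, Matrix.cons_val_zero, Matrix.cons_val_one,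
    Matrix.cons_val_two, Matrix.tail_cons, Matrix.head_cons]
  rcases h01 (g 0) with h0 | h0 <;> rcases h01 (g 1) with h1 | h1 <;>
    rcases h01 (g 2) with h2 | h2 <;>
    simp only [h0, h1, h2, zero_smul, one_smul, zero_add, add_zero] <;> grind

theorem isQuad_of_add_eq_zero {P Q R S : V} (hP : P ≠ 0) (hQ : Q ≠ 0) (hR : R ≠ 0) (hS : S ≠ 0)
    (hPQ : P ≠ Q) (hPR : P ≠ R) (hPS : P ≠ S) (hQR : Q ≠ R) (hQS : Q ≠ S) (hRS : R ≠ S)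
    (hsum : P + Q + R + S = 0) : IsQuad {P, Q, R, S} := by
  refine ⟨⟨P, Q, R, S, hP, hQ, hR, hS, hPQ, hPR, hPS, hQR, hQS, hRS, rfl⟩, ?_⟩
  rintro L ⟨u, v, w, -, -, -, huv, huw, hvw, huvw, rfl⟩ hsub
  simp only [Set.insert_subset_iff, Set.singleton_subset_iff, Set.mem_insert_iff,
    Set.mem_singleton_iff] at hsub
  obtain ⟨hu, hv, hw⟩ := hsub
  rcases hu with rfl | rfl | rfl | rfl <;> rcases hv with rfl | rfl | rfl | rfl <;>
    rcases hw with rfl | rfl | rfl | rfl <;> first | contradiction | grind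

theorem IsQuad.ne_zero {S : Set V} (hS : IsQuad S) {X : V} (hX : X ∈ S) : X ≠ 0 := by
  obtain ⟨⟨P, Q, R, T, hP, hQ, hR, hT, -, -, -, -, -, -, rfl⟩, -⟩ := hS
  rcases hX with rfl | rfl | rfl | rfl <;> assumption

theorem IsQuad.add_add_ne_zero {S : Set V} (hS : IsQuad S) {X Y Z : V} (hX : X ∈ S) (hY : Y ∈ S)
    (hZ : Z ∈ S) (hXY : X ≠ Y) (hXZ : X ≠ Z) (hYZ : Y ≠ Z) : X + Y + Z ≠ 0 := fun h =>
  hS.2 {X, Y, Z} ⟨X, Y, Z, hS.ne_zero hX, hS.ne_zero hY, hS.ne_zero hZ, hXY, hXZ, hYZ, h, rfl⟩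
    (by simp [Set.insert_subset_iff, hX, hY, hZ])

theorem IsQuad.eq_add_add {S : Set V} (hS : IsQuad S) {P a b c : V} (hP : P ∈ S) (ha : a ∈ S)
    (hb : b ∈ S) (hc : c ∈ S) (hPa : P ≠ a) (hPb : P ≠ b) (hPc : P ≠ c) (hab : a ≠ b)
    (hac : a ≠ c) (hbc : b ≠ c) : P = a + b + c := by
  rcases eq_or_of_triangle (hS.ne_zero ha) (hS.ne_zero hb) (hS.ne_zero hc) hab hac hbc rfl
    (hS.add_add_ne_zero ha hb hc hab hac hbc) P with h | h | h | h | h | h | h | h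
  · exact absurd h (hS.ne_zero hP)
  · exact h
  · exact absurd h hPa
  · exact absurd h hPb
  · exact absurd h hPc
  · exact absurd (by grind) (hS.add_add_ne_zero hP hb hc hPb hPc hbc)
  · exact absurd (by grind) (hS.add_add_ne_zero hP ha hc hPa hPc hac)
  · exact absurd (by grind) (hS.add_add_ne_zero hP ha hb hPa hPb hab)

section

variable {ε : V → V → ℤ}

namespace IsMulFactor

theorem apply_eq_one_or (hε : IsMulFactor ε) {P Q : V} (hP : P ≠ 0) (hQ : Q ≠ 0) (hPQ : P ≠ Q) :
    ε P Q = 1 ∨ ε P Q = -1 := (hε.1 P Q hP hQ hPQ).1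

theorem antisymm (hε : IsMulFactor ε) (P Q : V) : ε Q P = -ε P Q := by
  by_cases h : P = 0 ∨ Q = 0 ∨ P = Q
  · rw [hε.2 P Q h, hε.2 Q P (by tauto), neg_zero]
  · push Not at h
    obtain ⟨hP, hQ, hPQ⟩ := h
    exact (hε.1 P Q hP hQ hPQ).2

theorem ne_of_apply_ne_zero (hε : IsMulFactor ε) {P Q : V} (h : ε P Q ≠ 0) :
    P ≠ 0 ∧ Q ≠ 0 ∧ P ≠ Q := by
  by_contra h'
  exact h (hε.2 P Q (by tauto))

end IsMulFactor

namespace CompCond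

-- Since `ε` vanishes off pairs of distinct points of the Fano plane, this needs no hypotheses.
theorem cyclic (hc : CompCond ε) (hε : IsMulFactor ε) (P Q : V) : ε P Q = ε Q (P + Q) := by
  by_cases h : P = 0 ∨ Q = 0 ∨ P = Q
  · rcases h with rfl | rfl | rfl <;>
      simp [hε.2, CharTwo.add_self_eq_zero]
  · push Not at h
    obtain ⟨hP, hQ, hPQ⟩ := h
    exact Int.eq_of_mul_eq_one <| hc.1 P Q (P + Q) hP hQ (by rwa [Ne, CharTwo.add_eq_zero])
      hPQ (by simpa using hQ) (by simpa using hP) (CharTwo.add_self_eq_zero _)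

theorem add_apply_left (hc : CompCond ε) (hε : IsMulFactor ε) (P Q : V) :
    ε (P + Q) P = ε P Q := by
  rw [hc.cyclic hε P Q, hc.cyclic hε Q, add_left_comm, CharTwo.add_self_eq_zero, add_zero]

theorem apply_self_add (hc : CompCond ε) (hε : IsMulFactor ε) (P Q : V) :
    ε P (P + Q) = -ε P Q := by
  rw [hε.antisymm, hc.add_apply_left hε]

theorem cycle (hc : CompCond ε) {P Q R S : V} (hP : P ≠ 0) (hQ : Q ≠ 0) (hR : R ≠ 0)
    (hS : S ≠ 0) (hPQ : P ≠ Q) (hPR : P ≠ R) (hPS : P ≠ S) (hsum : P + Q + R + S = 0) :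
    ε P Q * ε Q R * ε R S * ε S P = -1 := by
  have hQR : Q ≠ R := by grind
  have hQS : Q ≠ S := by grind
  have hRS : R ≠ S := by grind
  exact hc.2 P Q R S hP hQ hR hS hPQ hPR hPS hQR hQS hRS
    (isQuad_of_add_eq_zero hP hQ hR hS hPQ hPR hPS hQR hQS hRS hsum)

end CompCond

/-- Under the composition conditions this says that `P` is the distinguished point of the
quadrilateral `{P, a, b, c}` and that `ε P` takes the value `s` on its oriented triangle. -/
structure IsApex (ε : V → V → ℤ) (s : ℤ) (P a b c : V) : Prop where
  eq_add_add : P = a + b + c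
  apply₁ : ε P a = s
  apply₂ : ε P b = s
  apply₃ : ε P c = s

namespace IsApex

variable {s : ℤ} {P a b c : V}

theorem rotate (h : IsApex ε s P a b c) : IsApex ε s P b c a :=
  ⟨by rw [h.eq_add_add]; abel, h.apply₂, h.apply₃, h.apply₁⟩

theorem swap (h : IsApex ε s P a b c) : IsApex ε s P a c b :=
  ⟨by rw [h.eq_add_add]; abel, h.apply₁, h.apply₃, h.apply₂⟩

theorem ne_zero_and_ne (h : IsApex ε s P a b c) (hε : IsMulFactor ε) (hs : s = 1 ∨ s = -1) :
    P ≠ 0 ∧ a ≠ 0 ∧ b ≠ 0 ∧ c ≠ 0 ∧ P ≠ a ∧ P ≠ b ∧ P ≠ c := by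
  have hs0 : s ≠ 0 := by omega
  obtain ⟨hP, ha, hPa⟩ := hε.ne_of_apply_ne_zero (h.apply₁ ▸ hs0)
  obtain ⟨-, hb, hPb⟩ := hε.ne_of_apply_ne_zero (h.apply₂ ▸ hs0)
  obtain ⟨-, hc, hPc⟩ := hε.ne_of_apply_ne_zero (h.apply₃ ▸ hs0)
  exact ⟨hP, ha, hb, hc, hPa, hPb, hPc⟩

theorem pairwise_ne (h : IsApex ε s P a b c) (hε : IsMulFactor ε) (hs : s = 1 ∨ s = -1) :
    a ≠ b ∧ a ≠ c ∧ b ≠ c := by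
  obtain ⟨-, -, -, -, hPa, hPb, hPc⟩ := h.ne_zero_and_ne hε hs
  refine ⟨?_, ?_, ?_⟩ <;> rintro rfl <;> grind [h.eq_add_add]

theorem eq_or (h : IsApex ε s P a b c) (hε : IsMulFactor ε) (hs : s = 1 ∨ s = -1) (Z : V) :
    Z = 0 ∨ Z = P ∨ Z = a ∨ Z = b ∨ Z = c ∨ Z = P + a ∨ Z = P + b ∨ Z = P + c := by
  obtain ⟨hP, ha, hb, hc, -, -, -⟩ := h.ne_zero_and_ne hε hs
  obtain ⟨hab, hac, hbc⟩ := h.pairwise_ne hε hs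
  exact eq_or_of_triangle ha hb hc hab hac hbc h.eq_add_add hP Z

theorem eq_or_eq_or_eq_of_apply_eq (h : IsApex ε s P a b c) (hε : IsMulFactor ε)
    (hc : CompCond ε) (hs : s = 1 ∨ s = -1) {Q : V} (hQ : ε P Q = s) : Q = a ∨ Q = b ∨ Q = c := by
  rcases h.eq_or hε hs Q with hQ' | hQ' | hQ' | hQ' | hQ' | rfl | rfl | rfl
  · rw [hQ', hε.2 P 0 (by simp)] at hQ; omega
  · rw [hQ', hε.2 P P (by simp)] at hQ; omega
  · exact .inl hQ'
  · exact .inr (.inl hQ')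
  · exact .inr (.inr hQ')
  · rw [hc.apply_self_add hε, h.apply₁] at hQ; omega
  · rw [hc.apply_self_add hε, h.apply₂] at hQ; omega
  · rw [hc.apply_self_add hε, h.apply₃] at hQ; omega

theorem apply_mul_apply_eq_neg_one (h : IsApex ε s P a b c) (hε : IsMulFactor ε)
    (hc : CompCond ε) (hs : s = 1 ∨ s = -1) : ε a b * ε a c = -1 := by
  obtain ⟨hP, ha, hb, hc0, hPa, hPb, hPc⟩ := h.ne_zero_and_ne hε hs
  have hcyc := hc.cycle hP hb ha hc0 hPb hPa hPc (by grind [h.eq_add_add])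
  rw [h.apply₂, hε.antisymm a b, hε.antisymm P c, h.apply₃] at hcyc
  rcases hs with rfl | rfl <;> linarith

theorem isApex_vertex (h : IsApex ε s P a b c) (hε : IsMulFactor ε) (hc : CompCond ε)
    (hs : s = 1 ∨ s = -1) (hab : ε a b = s) : IsApex ε s a b (P + a) (P + b) := by
  refine ⟨by grind [h.eq_add_add], hab, by rw [← hc.cyclic hε, h.apply₁], ?_⟩
  have hac := h.apply_mul_apply_eq_neg_one hε hc hs
  rw [show P + b = a + c by grind [h.eq_add_add], hc.apply_self_add hε]
  rw [hab] at hac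
  rcases hs with rfl | rfl <;> linarith

theorem isApex_add (h : IsApex ε s P a b c) (hε : IsMulFactor ε) (hc : CompCond ε)
    (hs : s = 1 ∨ s = -1) (hbc : ε b c = s) : IsApex ε s (P + a) P b (P + c) := by
  obtain ⟨hP, ha, hb, hc0, hPa, hPb, hPc⟩ := h.ne_zero_and_ne hε hs
  have hPa' : P + a = b + c := by grind [h.eq_add_add]
  refine ⟨by grind [h.eq_add_add], by rw [hc.add_apply_left hε, h.apply₁],
    by rw [hPa', hc.add_apply_left hε, hbc], ?_⟩
  have hba : ε b (P + a) = -s := by rw [hPa', hc.apply_self_add hε, hbc]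
  have hcyc := hc.cycle (R := P + a) (S := P + c) hP hb (by grind) (by grind) hPb (by grind)
    (by grind) (by grind [h.eq_add_add])
  rw [h.apply₂, hba, hc.add_apply_left hε, h.apply₃] at hcyc
  rcases hs with rfl | rfl <;> linarith

theorem exists_isApex_vertex (h : IsApex ε s P a b c) (hε : IsMulFactor ε) (hc : CompCond ε)
    (hs : s = 1 ∨ s = -1) : ∃ u v w, IsApex ε s a u v w := by
  by_cases hab : ε a b = s
  · exact ⟨_, _, _, h.isApex_vertex hε hc hs hab⟩
  · have hac : ε a c = s := by
      have := h.apply_mul_apply_eq_neg_one hε hc hs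
      rcases Int.mul_eq_neg_one_iff_eq_one_or_neg_one.1 this with ⟨h₁, h₂⟩ | ⟨h₁, h₂⟩ <;> omega
    exact ⟨_, _, _, h.swap.isApex_vertex hε hc hs hac⟩

theorem exists_isApex_add (h : IsApex ε s P a b c) (hε : IsMulFactor ε) (hc : CompCond ε)
    (hs : s = 1 ∨ s = -1) : ∃ u v w, IsApex ε s (P + a) u v w := by
  by_cases hbc : ε b c = s
  · exact ⟨_, _, _, h.isApex_add hε hc hs hbc⟩
  · obtain ⟨-, -, hb, hc0, -, -, -⟩ := h.ne_zero_and_ne hε hs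
    have hcb : ε c b = s := by
      rw [hε.antisymm]
      rcases hε.apply_eq_one_or hb hc0 (h.pairwise_ne hε hs).2.2 with h' | h' <;> omega
    exact ⟨_, _, _, h.swap.isApex_add hε hc hs hcb⟩

theorem exists_isApex (h : IsApex ε s P a b c) (hε : IsMulFactor ε) (hc : CompCond ε)
    (hs : s = 1 ∨ s = -1) {Q : V} (hQ : Q ≠ 0) : ∃ u v w, IsApex ε s Q u v w := by
  rcases h.eq_or hε hs Q with rfl | rfl | rfl | rfl | rfl | rfl | rfl | rfl
  · exact absurd rfl hQ
  · exact ⟨_, _, _, h⟩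
  · exact h.exists_isApex_vertex hε hc hs
  · exact h.rotate.exists_isApex_vertex hε hc hs
  · exact h.rotate.rotate.exists_isApex_vertex hε hc hs
  · exact h.exists_isApex_add hε hc hs
  · exact h.rotate.exists_isApex_add hε hc hs
  · exact h.rotate.rotate.exists_isApex_add hε hc hs

theorem not_isApex_neg (h : IsApex ε s P a b c) (hε : IsMulFactor ε) (hc : CompCond ε)
    (hs : s = 1 ∨ s = -1) {x y z : V} (h' : IsApex ε (-s) P x y z) : False := by
  have hs' : -s = 1 ∨ -s = -1 := by omega
  obtain ⟨hP, -, -, -, -, -, -⟩ := h'.ne_zero_and_ne hε hs'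
  obtain ⟨hxy, hxz, hyz⟩ := h'.pairwise_ne hε hs'
  have hmem : ∀ X, ε P X = -s → P + X = a ∨ P + X = b ∨ P + X = c := fun X hX =>
    h.eq_or_eq_or_eq_of_apply_eq hε hc hs (by rw [hc.apply_self_add hε, hX, neg_neg])
  have hsum := add_add_eq_of_eq_or ((add_right_injective P).ne hxy)
    ((add_right_injective P).ne hxz) ((add_right_injective P).ne hyz)
    (hmem x h'.apply₁) (hmem y h'.apply₂) (hmem z h'.apply₃)
  exact hP (by grind [h.eq_add_add, h'.eq_add_add])

end IsApex

theorem exists_isApex_of_isDistPt (hε : IsMulFactor ε) (hc : CompCond ε)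
    {S : Set V} (hS : IsQuad S) {P : V} (h : IsDistPt ε S P) :
    ∃ s, (s = 1 ∨ s = -1) ∧ (∀ R ∈ S \ {P}, ε P R = s) ∧ ∃ a b c, IsApex ε s P a b c := by
  obtain ⟨hPS, -, a, b, c, hT, hab, hac, hbc, hτ₁, hτ₂⟩ := h
  have ha : a ∈ S \ {P} := by rw [hT]; simp
  have hb : b ∈ S \ {P} := by rw [hT]; simp
  have hc' : c ∈ S \ {P} := by rw [hT]; simp
  have hPa : P ≠ a := fun e => ha.2 e.symm
  have hPb : P ≠ b := fun e => hb.2 e.symm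
  have hPc : P ≠ c := fun e => hc'.2 e.symm
  have hP0 := hS.ne_zero hPS
  have ha0 := hS.ne_zero ha.1
  have hb0 := hS.ne_zero hb.1
  have hc0 := hS.ne_zero hc'.1
  have hP := hS.eq_add_add hPS ha.1 hb.1 hc'.1 hPa hPb hPc hab hac hbc
  have h₁ := hc.cycle hP0 ha0 hb0 hc0 hPa hPb hPc (by grind)
  have h₂ := hc.cycle hP0 hb0 hc0 ha0 hPb hPc hPa (by grind)
  rw [hτ₁, hε.antisymm P c] at h₁
  rw [← hτ₂, hε.antisymm P a] at h₂
  have hPac : ε P a = ε P c := by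
    refine Int.eq_of_mul_eq_one ?_
    rcases hε.apply_eq_one_or hb0 hc0 hbc with hτ | hτ <;> rw [hτ] at h₁ <;> linarith
  have hPab : ε P a = ε P b := by
    refine Int.eq_of_mul_eq_one ?_
    rcases hε.apply_eq_one_or hb0 hc0 hbc with hτ | hτ <;> rw [hτ] at h₂ <;> linarith
  refine ⟨ε P a, hε.apply_eq_one_or hP0 ha0 hPa, ?_, a, b, c, hP, rfl, hPab.symm, hPac.symm⟩
  rw [hT]
  rintro R (rfl | rfl | rfl)
  exacts [rfl, hPab.symm, hPac.symm]

end

theorem stmt_7_general (ε : V → V → ℤ) (hε : IsMulFactor ε) (hc : CompCond ε)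
    (S₁ S₂ : Set V) (hS₁ : IsQuad S₁) (hS₂ : IsQuad S₂)
    (P₁ P₂ : V) (h₁ : IsDistPt ε S₁ P₁) (h₂ : IsDistPt ε S₂ P₂) :
    ∀ R₁ ∈ S₁ \ {P₁}, ∀ R₂ ∈ S₂ \ {P₂}, ε P₁ R₁ = ε P₂ R₂ := by
  obtain ⟨s₁, hs₁, hval₁, a, b, c, hA₁⟩ := exists_isApex_of_isDistPt hε hc hS₁ h₁
  obtain ⟨s₂, hs₂, hval₂, x, y, z, hA₂⟩ := exists_isApex_of_isDistPt hε hc hS₂ h₂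
  intro R₁ hR₁ R₂ hR₂
  rw [hval₁ R₁ hR₁, hval₂ R₂ hR₂]
  by_contra hne
  have hs : s₂ = -s₁ := by omega
  obtain ⟨u, v, w, hA⟩ := hA₁.exists_isApex hε hc hs₁ (hA₂.ne_zero_and_ne hε hs₂).1
  exact hA.not_isApex_neg hε hc hs₁ (hs ▸ hA₂)

/-- for distinct quadrilaterals with oriented triangles `T₁ = S₁ \ {P₁}`,
`T₂ = S₂ \ {P₂}` and distinguished points `P₁, P₂`: `ε P₁ R₁ = ε P₂ R₂` for all `R₁ ∈ T₁`,
`R₂ ∈ T₂`. -/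
theorem stmt_7 (ε : V → V → ℤ) (hε : IsMulFactor ε) (hc : CompCond ε)
    (S₁ S₂ : Set V) (hS₁ : IsQuad S₁) (hS₂ : IsQuad S₂) (hne : S₁ ≠ S₂)
    (P₁ P₂ : V) (h₁ : IsDistPt ε S₁ P₁) (h₂ : IsDistPt ε S₂ P₂) :
    ∀ R₁ ∈ S₁ \ {P₁}, ∀ R₂ ∈ S₂ \ {P₂}, ε P₁ R₁ = ε P₂ R₂ :=
  stmt_7_general ε hε hc S₁ S₂ hS₁ hS₂ P₁ P₂ h₁ h₂
end

section
/- Let α be an oriented map. Then each set Δ_P = {Q ∈ F : Q ≠ P and α_P(Q) = 1} is a triangle, the map P ↦ Δ_P is injective, and the family of seven triangles {Δ_P : P ∈ F} satisfies the Fano axioms. -/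
open Finset

/-! ### Auxiliary material for `stmt_8` -/

/-- Dot product on `V`. -/
def Dot (u x : V) : ZMod 2 := ∑ i, x i * u i

/-- The vector of values of a linear form on the standard basis. -/
def tvec (f : V →ₗ[ZMod 2] ZMod 2) : V := fun i => f (fun j => if i = j then 1 else 0)

lemma apply_eq_dot (f : V →ₗ[ZMod 2] ZMod 2) (x : V) : f x = Dot (tvec f) x := by
  rw [Dot, LinearMap.pi_apply_eq_sum_univ f x]
  simp [tvec, smul_eq_mul]

lemma z_or : ∀ a b : ZMod 2, a + b = 1 → a = 1 ∨ b = 1 := by decide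
lemma z_fst : ∀ a b : ZMod 2, a + b = 1 → b = 0 → a = 1 := by decide
lemma z_snd : ∀ a b : ZMod 2, a + b = 1 → a = 1 → b = 0 := by decide

def P1aux : Prop := ∀ u v q r : V, Dot u q = 1 → Dot v r = 1 → Dot u r + Dot v q = 1 →
    q ≠ 0 → r ≠ 0 → q ≠ r →
    ∃ p : V, (p ≠ 0 ∧ Dot u p = 0 ∧ Dot v p = 0) ∧
      ∀ y : V, (y ≠ 0 ∧ Dot u y = 0 ∧ Dot v y = 0) → y = p

def P2aux : Prop := ∀ u v p q : V, Dot u p = 1 → Dot v q = 1 → Dot u q + Dot v p = 1 →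
    p ≠ 0 → q ≠ 0 → p ≠ q →
    ∃ x : V, (x ≠ 0 ∧ x ≠ p ∧ x ≠ q ∧ Dot u x = 1 ∧ Dot v x = 1) ∧
      ∀ y : V, (y ≠ 0 ∧ y ≠ p ∧ y ≠ q ∧ Dot u y = 1 ∧ Dot v y = 1) → y = x

def P3aux : Prop := ∀ u p : V, Dot u p = 1 →
    ∃ a b c : V, a ≠ 0 ∧ b ≠ 0 ∧ c ≠ 0 ∧ a ≠ b ∧ a ≠ c ∧ b ≠ c ∧ a + b + c ≠ 0 ∧
      ∀ x : V, (x ≠ 0 ∧ x ≠ p ∧ Dot u x = 1) ↔ (x = a ∨ x = b ∨ x = c)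

set_option synthInstance.maxHeartbeats 1000000 in
set_option synthInstance.maxSize 2000 in
instance : Decidable P1aux := by unfold P1aux; infer_instance
set_option synthInstance.maxHeartbeats 1000000 in
set_option synthInstance.maxSize 2000 in
instance : Decidable P2aux := by unfold P2aux; infer_instance
set_option synthInstance.maxHeartbeats 1000000 in
set_option synthInstance.maxSize 2000 in
instance : Decidable P3aux := by unfold P3aux; infer_instance

set_option maxHeartbeats 4000000 in
set_option maxRecDepth 100000 in
lemma D1aux : P1aux := by decide
set_option maxHeartbeats 4000000 in
set_option maxRecDepth 100000 in
lemma D2aux : P2aux := by decide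
set_option maxHeartbeats 4000000 in
set_option maxRecDepth 100000 in
lemma D3aux : P3aux := by decide

/-- for an oriented map `α`, the sets `Δ_P` are triangles, `P ↦ Δ_P` is
injective, and the family of seven triangles `{Δ_P}` satisfies the Fano axioms. -/
theorem stmt_8 (α : V → V →ₗ[ZMod 2] ZMod 2) (hα : IsOrientedMap α) :
    (∀ P : V, P ≠ 0 → IsTriangle (DeltaSet α P)) ∧
    (∀ P Q : V, P ≠ 0 → Q ≠ 0 → DeltaSet α P = DeltaSet α Q → P = Q) ∧
    FanoFamily {S : Set V | ∃ P : V, P ≠ 0 ∧ S = DeltaSet α P} := by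
  obtain ⟨hself', hanti, -⟩ := hα
  have hs : ∀ P : V, P ≠ 0 → α P P = 1 := by
    intro P hP; simpa using hself' P hP
  have hdot : ∀ P x : V, α P x = Dot (tvec (α P)) x := fun P x => apply_eq_dot (α P) x
  have hmem : ∀ P x : V, x ∈ DeltaSet α P ↔ (x ≠ 0 ∧ x ≠ P ∧ α P x = 1) := fun P x => Iff.rfl
  have inj : ∀ P Q : V, P ≠ 0 → Q ≠ 0 → DeltaSet α P = DeltaSet α Q → P = Q := by
    intro P Q hP hQ hPQ
    by_contra hne
    have h := hanti P Q hP hQ hne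
    rcases z_or _ _ h with h1 | h1
    · have hQmem : Q ∈ DeltaSet α P := ⟨hQ, fun e => hne e.symm, h1⟩
      rw [hPQ] at hQmem
      exact hQmem.2.1 rfl
    · have hPmem : P ∈ DeltaSet α Q := ⟨hP, hne, h1⟩
      rw [← hPQ] at hPmem
      exact hPmem.2.1 rfl
  refine ⟨?_, inj, ?_, ?_⟩
  · -- triangles
    intro P hP
    have h1 : Dot (tvec (α P)) P = 1 := (hdot P P).symm.trans (hs P hP)
    obtain ⟨a, b, c, ha, hb, hc, hab, hac, hbc, habc, hch⟩ := D3aux (tvec (α P)) P h1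
    refine ⟨a, b, c, ha, hb, hc, hab, hac, hbc, habc, ?_⟩
    ext x
    simp only [DeltaSet, Set.mem_setOf_eq, Set.mem_insert_iff, Set.mem_singleton_iff]
    rw [hdot P x]
    exact hch x
  · -- two points determine a unique member
    intro Q R hQ hR hQR
    have huQ : Dot (tvec (α Q)) Q = 1 := (hdot Q Q).symm.trans (hs Q hQ)
    have hvR : Dot (tvec (α R)) R = 1 := (hdot R R).symm.trans (hs R hR)
    have hmix : Dot (tvec (α Q)) R + Dot (tvec (α R)) Q = 1 := by
      rw [← hdot Q R, ← hdot R Q]; exact hanti Q R hQ hR hQR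
    obtain ⟨p, ⟨hp0, hup, hvp⟩, huniq⟩ :=
      D1aux (tvec (α Q)) (tvec (α R)) Q R huQ hvR hmix hQ hR hQR
    have hpQ : p ≠ Q := fun e => by rw [e, huQ] at hup; exact one_ne_zero hup
    have hpR : p ≠ R := fun e => by rw [e, hvR] at hvp; exact one_ne_zero hvp
    refine ⟨DeltaSet α p, ⟨⟨p, hp0, rfl⟩, ?_, ?_⟩, ?_⟩
    · exact ⟨hQ, fun e => hpQ e.symm,
        z_fst _ _ (hanti p Q hp0 hQ hpQ) ((hdot Q p).trans hup)⟩
    · exact ⟨hR, fun e => hpR e.symm,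
        z_fst _ _ (hanti p R hp0 hR hpR) ((hdot R p).trans hvp)⟩
    · rintro T ⟨⟨p', hp'0, rfl⟩, hQT, hRT⟩
      obtain ⟨-, hQp', hαQ⟩ := hQT
      obtain ⟨-, hRp', hαR⟩ := hRT
      have h1 : Dot (tvec (α Q)) p' = 0 := by
        rw [← hdot Q p']
        exact z_snd _ _ (hanti p' Q hp'0 hQ (fun e => hQp' e.symm)) hαQ
      have h2 : Dot (tvec (α R)) p' = 0 := by
        rw [← hdot R p']
        exact z_snd _ _ (hanti p' R hp'0 hR (fun e => hRp' e.symm)) hαR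
      rw [huniq p' ⟨hp'0, h1, h2⟩]
  · -- two distinct members meet in a unique point
    rintro T1 T2 ⟨P, hP, rfl⟩ ⟨Q, hQ, rfl⟩ hne
    have hPQ : P ≠ Q := fun e => hne (by rw [e])
    have huP : Dot (tvec (α P)) P = 1 := (hdot P P).symm.trans (hs P hP)
    have hvQ : Dot (tvec (α Q)) Q = 1 := (hdot Q Q).symm.trans (hs Q hQ)
    have hmix : Dot (tvec (α P)) Q + Dot (tvec (α Q)) P = 1 := by
      rw [← hdot P Q, ← hdot Q P]; exact hanti P Q hP hQ hPQ
    obtain ⟨x, ⟨hx0, hxP, hxQ, hux, hvx⟩, huniq⟩ :=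
      D2aux (tvec (α P)) (tvec (α Q)) P Q huP hvQ hmix hP hQ hPQ
    refine ⟨x, ⟨⟨hx0, hxP, (hdot P x).trans hux⟩, ⟨hx0, hxQ, (hdot Q x).trans hvx⟩⟩, ?_⟩
    rintro y ⟨⟨hy0, hyP, h1⟩, ⟨-, hyQ, h2⟩⟩
    exact huniq y ⟨hy0, hyP, hyQ, (hdot P y).symm.trans h1, (hdot Q y).symm.trans h2⟩
end

section
/- Let Δ be a set of seven triangles in F satisfying the Fano axioms. Then there exists a unique oriented map α such that Δ = {Δ_P : P ∈ F}, where Δ_P = {Q ∈ F : Q ≠ P and α_P(Q) = 1}. -/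
open Finset

/-!
The vertex sum of a triangle of the Fano plane is a point off the triangle, and the Fano axioms
force `T ↦ vertexSum T` to be injective on `Δ`, hence a bijection onto the seven points. A linear
form `f` with `f P = 1` is determined by its set `Δ_P`, because `𝔽₂`-valued maps are determined by
where they equal `1`; and for a triangle `{a, b, c}` with vertex sum `P`, the form equal to `1` on
`a, b, c` has `Δ_P = {a, b, c}`, since the affine plane `f = 1` has only four points. Orientedness
says that exactly one of `Q ∈ Δ_P`, `P ∈ Δ_Q` holds: the Fano axioms rule out both, and counting
the `7 · 3 = 21` pairs with `Q ∈ Δ_P` against the `21` pairs of points rules out neither.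
-/

theorem ZMod.eq_of_eq_one_iff {x y : ZMod 2} : (x = 1 ↔ y = 1) → x = y := by
  revert x y
  decide

theorem ZMod.add_eq_one_of_eq_one_or {x y : ZMod 2} :
    x = 1 ∨ y = 1 → ¬ (x = 1 ∧ y = 1) → x + y = 1 := by
  revert x y
  decide

theorem Finset.rel_or_rel_of_card_filter_eq {ι : Type*} [DecidableEq ι] {s : Finset ι}
    {r : ι → ι → Prop} [DecidableRel r] {k : ℕ} (hs : #s = 2 * k + 1)
    (hdeg : ∀ a ∈ s, #{b ∈ s | r a b} = k) (hasymm : ∀ a ∈ s, ∀ b ∈ s, r a b → ¬ r b a)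
    {a b : ι} (ha : a ∈ s) (hb : b ∈ s) (hab : a ≠ b) : r a b ∨ r b a := by
  set E := {p ∈ s ×ˢ s | r p.1 p.2}
  set E' := {p ∈ s ×ˢ s | r p.2 p.1}
  have hE : #E = #s * k := calc
    #E = ∑ a ∈ s, ∑ b ∈ s, if r a b then 1 else 0 := by rw [card_filter, sum_product]
    _ = ∑ _a ∈ s, k := sum_congr rfl fun a ha => by rw [← card_filter, hdeg a ha]
    _ = #s * k := by rw [sum_const, smul_eq_mul]
  have hE' : #E' = #E := calc
    #E' = ∑ a ∈ s, ∑ b ∈ s, if r b a then 1 else 0 := by rw [card_filter, sum_product]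
    _ = #E := by rw [sum_comm, card_filter, sum_product]
  have hdisj : Disjoint E E' := disjoint_filter.2 fun p hp h h' =>
    hasymm _ (mem_product.1 hp).1 _ (mem_product.1 hp).2 h h'
  have hsub : E ∪ E' ⊆ s.offDiag := by
    intro p hp
    rcases mem_union.1 hp with hp | hp <;> obtain ⟨hp, h⟩ := mem_filter.1 hp <;>
      obtain ⟨h₁, h₂⟩ := mem_product.1 hp
    · exact mem_offDiag.2 ⟨h₁, h₂, fun he => hasymm _ h₁ _ h₂ h (he ▸ h)⟩
    · exact mem_offDiag.2 ⟨h₁, h₂, fun he => hasymm _ h₂ _ h₁ h (he ▸ h)⟩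
  have hunion : E ∪ E' = s.offDiag := by
    refine eq_of_subset_of_card_le hsub ?_
    rw [card_union_of_disjoint hdisj, hE', hE, offDiag_card, hs]
    apply Nat.sub_le_of_le_add
    nlinarith
  have hmem : (a, b) ∈ E ∪ E' := hunion ▸ mem_offDiag.2 ⟨ha, hb, hab⟩
  rcases mem_union.1 hmem with h | h
  exacts [Or.inl (mem_filter.1 h).2, Or.inr (mem_filter.1 h).2]

noncomputable def vertexSum (T : Set V) : V := ∑ᶠ x ∈ T, x

theorem vertexSum_triple {a b c : V} (hab : a ≠ b) (hac : a ≠ c) (hbc : b ≠ c) :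
    vertexSum {a, b, c} = a + b + c := by
  rw [vertexSum, finsum_mem_insert _ (by simp [hab, hac]) (Set.toFinite _), finsum_mem_pair hbc,
    add_assoc]

namespace IsTriangle

variable {T : Set V}

theorem ncard_eq (hT : IsTriangle T) : T.ncard = 3 := by
  obtain ⟨P, Q, R, -, -, -, hPQ, hPR, hQR, -, rfl⟩ := hT
  exact Set.ncard_eq_three.2 ⟨P, Q, R, hPQ, hPR, hQR, rfl⟩

theorem zero_notMem (hT : IsTriangle T) : (0 : V) ∉ T := by
  obtain ⟨P, Q, R, hP, hQ, hR, -, -, -, -, rfl⟩ := hT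
  simp [hP.symm, hQ.symm, hR.symm]

theorem vertexSum_ne_zero (hT : IsTriangle T) : vertexSum T ≠ 0 := by
  obtain ⟨P, Q, R, -, -, -, hPQ, hPR, hQR, hsum, rfl⟩ := hT
  rwa [vertexSum_triple hPQ hPR hQR]

theorem vertexSum_notMem (hT : IsTriangle T) : vertexSum T ∉ T := by
  obtain ⟨P, Q, R, -, -, -, hPQ, hPR, hQR, -, rfl⟩ := hT
  rw [vertexSum_triple hPQ hPR hQR]
  simp only [Set.mem_insert_iff, Set.mem_singleton_iff]
  grind

theorem vertexSum_add_add_mem (hT : IsTriangle T) {X Y : V} (hX : X ∈ T) (hY : Y ∈ T)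
    (hXY : X ≠ Y) : vertexSum T + X + Y ∈ T := by
  obtain ⟨P, Q, R, -, -, -, hPQ, hPR, hQR, -, rfl⟩ := hT
  rw [vertexSum_triple hPQ hPR hQR]
  simp only [Set.mem_insert_iff, Set.mem_singleton_iff] at hX hY ⊢
  grind

theorem vertexSum_add_notMem (hT : IsTriangle T) {X : V} (hX : X ∈ T) : vertexSum T + X ∉ T := by
  intro h
  have h₀ := hT.vertexSum_add_add_mem hX h (by simpa using hT.vertexSum_ne_zero)
  rw [CharTwo.add_self_eq_zero] at h₀
  exact hT.zero_notMem h₀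

theorem mem_union_of_inter_eq_singleton {T' : Set V} (hT : IsTriangle T) (hT' : IsTriangle T')
    (hs : vertexSum T = vertexSum T') {X : V} (hX : T ∩ T' = {X}) {x : V} (hx₀ : x ≠ 0)
    (hxs : x ≠ vertexSum T) (hxm : x ≠ vertexSum T + X) : x ∈ T ∪ T' := by
  set s := vertexSum T
  have hXT : X ∈ T ∩ T' := hX ▸ rfl
  have hunion : (T ∪ T').ncard = 5 := by
    have := Set.ncard_union_add_ncard_inter T T'
    rw [hX, Set.ncard_singleton, hT.ncard_eq, hT'.ncard_eq] at this
    omega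
  have hrest : ({0, s, s + X} : Set V).ncard = 3 := by
    refine Set.ncard_eq_three.2 ⟨0, s, s + X, hT.vertexSum_ne_zero.symm, ?_, ?_, rfl⟩
    · intro h
      rw [← CharTwo.add_eq_zero.1 h.symm] at hXT
      exact hT.vertexSum_notMem hXT.1
    · intro h
      exact hT.zero_notMem ((by simpa using h : X = 0) ▸ hXT.1)
  have hdisj : Disjoint (T ∪ T') {0, s, s + X} := by
    simp only [Set.disjoint_insert_right, Set.disjoint_singleton_right, Set.mem_union, not_or]
    exact ⟨⟨hT.zero_notMem, hT'.zero_notMem⟩, ⟨hT.vertexSum_notMem, hs ▸ hT'.vertexSum_notMem⟩,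
      hT.vertexSum_add_notMem hXT.1, hs ▸ hT'.vertexSum_add_notMem hXT.2⟩
  have huniv : T ∪ T' ∪ {0, s, s + X} = Set.univ := by
    refine Set.eq_of_subset_of_ncard_le (Set.subset_univ _) ?_
    rw [Set.ncard_union_eq hdisj, hunion, hrest, Set.ncard_univ]
    simp
  have hx : x ∈ T ∪ T' ∪ {0, s, s + X} := huniv ▸ Set.mem_univ x
  simpa [hx₀, hxs, hxm] using hx

end IsTriangle

theorem card_filter_dotProduct_eq_one :
    ∀ w P : V, w ⬝ᵥ P = 1 → #{Q | Q ≠ 0 ∧ Q ≠ P ∧ w ⬝ᵥ Q = 1} = 3 := by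
  decide

set_option synthInstance.maxSize 2000 in
theorem exists_dotProduct_eq_one : ∀ a b c : V, a ≠ 0 → b ≠ 0 → c ≠ 0 → a ≠ b → a ≠ c → b ≠ c →
    a + b + c ≠ 0 → ∃ w : V, w ⬝ᵥ a = 1 ∧ w ⬝ᵥ b = 1 ∧ w ⬝ᵥ c = 1 := by
  decide

theorem ncard_deltaSet {α : V → V →ₗ[ZMod 2] ZMod 2} {P : V} (h : α P P = 1) :
    (DeltaSet α P).ncard = 3 := by
  obtain ⟨w, hw⟩ := (dotProductEquiv (ZMod 2) (Fin 3)).surjective (α P)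
  have hset : DeltaSet α P = ↑({Q | Q ≠ 0 ∧ Q ≠ P ∧ w ⬝ᵥ Q = 1} : Finset V) := by
    ext Q
    simp [DeltaSet, ← hw]
  rw [hset, Set.ncard_coe_finset]
  exact card_filter_dotProduct_eq_one w P (by simpa [← hw] using h)

theorem vertexSum_deltaSet {α : V → V →ₗ[ZMod 2] ZMod 2} {P : V}
    (hT : IsTriangle (DeltaSet α P)) : vertexSum (DeltaSet α P) = P := by
  have hform : α P (vertexSum (DeltaSet α P)) = 1 := by
    obtain ⟨a, b, c, -, -, -, hab, hac, hbc, -, hT'⟩ := id hT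
    have h₁ : ∀ x ∈ DeltaSet α P, α P x = 1 := fun x hx => hx.2.2
    rw [hT'] at h₁ ⊢
    rw [vertexSum_triple hab hac hbc, map_add, map_add, h₁ a (by simp), h₁ b (by simp),
      h₁ c (by simp)]
    decide
  by_contra hne
  exact hT.vertexSum_notMem ⟨hT.vertexSum_ne_zero, hne, hform⟩

theorem IsTriangle.exists_deltaSet_eq {T : Set V} (hT : IsTriangle T) :
    ∃ f : V →ₗ[ZMod 2] ZMod 2, f (vertexSum T) = 1 ∧
      {Q | Q ≠ 0 ∧ Q ≠ vertexSum T ∧ f Q = 1} = T := by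
  obtain ⟨a, b, c, ha, hb, hc, hab, hac, hbc, habc, rfl⟩ := id hT
  obtain ⟨w, hwa, hwb, hwc⟩ := exists_dotProduct_eq_one a b c ha hb hc hab hac hbc habc
  set f := dotProductEquiv (ZMod 2) (Fin 3) w
  have hf : ∀ Q ∈ ({a, b, c} : Set V), f Q = 1 := by
    simpa [f, dotProductEquiv_apply_apply] using ⟨hwa, hwb, hwc⟩
  have hfs : f (vertexSum {a, b, c}) = 1 := by
    rw [vertexSum_triple hab hac hbc, map_add, map_add, hf a (by simp), hf b (by simp),
      hf c (by simp)]
    decide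
  refine ⟨f, hfs, (Set.eq_of_subset_of_ncard_le (fun Q hQ => ?_) ?_).symm⟩
  · exact ⟨ne_of_mem_of_not_mem hQ hT.zero_notMem, ne_of_mem_of_not_mem hQ hT.vertexSum_notMem,
      hf Q hQ⟩
  · rw [hT.ncard_eq]
    exact (ncard_deltaSet (α := fun _ => f) hfs).le

theorem eq_of_deltaSet_eq {α β : V → V →ₗ[ZMod 2] ZMod 2} {P : V} (hα : α P P = 1)
    (hβ : β P P = 1) (h : DeltaSet α P = DeltaSet β P) : α P = β P := by
  refine LinearMap.ext fun Q => ?_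
  by_cases hQ : Q = 0
  · simp [hQ]
  by_cases hQP : Q = P
  · rw [hQP, hα, hβ]
  exact ZMod.eq_of_eq_one_iff (by simpa [DeltaSet, hQ, hQP] using Set.ext_iff.1 h Q)

def Realizes (Δ : Set (Set V)) (α : V → V →ₗ[ZMod 2] ZMod 2) : Prop :=
  α 0 = 0 ∧ ∀ P : V, P ≠ 0 → α P P = 1 ∧ DeltaSet α P ∈ Δ

theorem realizes_of_isOrientedMap {Δ : Set (Set V)} {α : V → V →ₗ[ZMod 2] ZMod 2}
    (hα : IsOrientedMap α) (hΔ : Δ = {S : Set V | ∃ P : V, P ≠ 0 ∧ S = DeltaSet α P}) :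
    Realizes Δ α :=
  ⟨hα.2.2, fun P hP => ⟨by simpa using hα.1 P hP, hΔ ▸ ⟨P, hP, rfl⟩⟩⟩

namespace FanoFamily

variable {Δ : Set (Set V)}

theorem eq_of_mem_of_mem (hΔ : FanoFamily Δ) {T₁ T₂ : Set V} (h₁ : T₁ ∈ Δ) (h₂ : T₂ ∈ Δ)
    {P Q : V} (hP : P ≠ 0) (hQ : Q ≠ 0) (hPQ : P ≠ Q) (hP₁ : P ∈ T₁) (hQ₁ : Q ∈ T₁)
    (hP₂ : P ∈ T₂) (hQ₂ : Q ∈ T₂) : T₁ = T₂ :=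
  (hΔ.1 P Q hP hQ hPQ).unique ⟨h₁, hP₁, hQ₁⟩ ⟨h₂, hP₂, hQ₂⟩

theorem exists_inter_eq_singleton (hΔ : FanoFamily Δ) {T₁ T₂ : Set V} (h₁ : T₁ ∈ Δ)
    (h₂ : T₂ ∈ Δ) (hne : T₁ ≠ T₂) : ∃ X, T₁ ∩ T₂ = {X} := by
  obtain ⟨X, hX, huniq⟩ := hΔ.2 T₁ T₂ h₁ h₂ hne
  exact ⟨X, Set.eq_singleton_iff_unique_mem.2 ⟨hX, huniq⟩⟩

/-- If `T₁ ≠ T₂` have vertex sum `s` and meet in `X`, the member through `X` and `s + X` has its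
third vertex in `T₁ ∪ T₂`, so it is `T₁` or `T₂`; but `s + X` lies on neither. -/
theorem injOn_vertexSum (hΔ : FanoFamily Δ) (htri : ∀ T ∈ Δ, IsTriangle T) :
    Set.InjOn vertexSum Δ := by
  intro T₁ h₁ T₂ h₂ hs
  by_contra hne
  have hT₁ := htri T₁ h₁
  have hT₂ := htri T₂ h₂
  obtain ⟨X, hX⟩ := hΔ.exists_inter_eq_singleton h₁ h₂ hne
  have hX' : X ∈ T₁ ∩ T₂ := hX ▸ rfl
  have hX₀ : X ≠ 0 := ne_of_mem_of_not_mem hX'.1 hT₁.zero_notMem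
  have hsX : vertexSum T₁ ≠ X := (ne_of_mem_of_not_mem hX'.1 hT₁.vertexSum_notMem).symm
  have hm₀ : vertexSum T₁ + X ≠ 0 := fun h => hsX (CharTwo.add_eq_zero.1 h)
  have hXm : X ≠ vertexSum T₁ + X := by simpa using hT₁.vertexSum_ne_zero
  obtain ⟨T₃, ⟨h₃, hX₃, hm₃⟩, -⟩ := hΔ.1 X _ hX₀ hm₀ hXm
  have hT₃ := htri T₃ h₃
  have hx₃ := hT₃.vertexSum_add_add_mem hX₃ hm₃ hXm
  have hx₀ := ne_of_mem_of_not_mem hx₃ hT₃.zero_notMem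
  have hs₃₀ := hT₃.vertexSum_ne_zero
  have hs₃X : vertexSum T₃ ≠ X := (ne_of_mem_of_not_mem hX₃ hT₃.vertexSum_notMem).symm
  have hs₃m : vertexSum T₃ ≠ vertexSum T₁ + X :=
    (ne_of_mem_of_not_mem hm₃ hT₃.vertexSum_notMem).symm
  have hxX : vertexSum T₃ + X + (vertexSum T₁ + X) ≠ X := by grind
  have hx := hT₁.mem_union_of_inter_eq_singleton hT₂ hs hX hx₀ (by grind) (by grind)
  rcases hx with hx | hx
  · have := hΔ.eq_of_mem_of_mem h₃ h₁ hX₀ hx₀ hxX.symm hX₃ hx₃ hX'.1 hx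
    exact hT₁.vertexSum_add_notMem hX'.1 (this ▸ hm₃)
  · have := hΔ.eq_of_mem_of_mem h₃ h₂ hX₀ hx₀ hxX.symm hX₃ hx₃ hX'.2 hx
    exact hT₂.vertexSum_add_notMem hX'.2 (hs ▸ this ▸ hm₃)

/-- If `z` is the common point of `T₁` and `T₂`, then `vertexSum T₁ + vertexSum T₂ + z` would be
a second one. -/
theorem vertexSum_notMem_of_mem (hΔ : FanoFamily Δ) (htri : ∀ T ∈ Δ, IsTriangle T)
    {T₁ T₂ : Set V} (h₁ : T₁ ∈ Δ) (h₂ : T₂ ∈ Δ) (h : vertexSum T₂ ∈ T₁) : vertexSum T₁ ∉ T₂ := by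
  intro h'
  have hT₁ := htri T₁ h₁
  have hT₂ := htri T₂ h₂
  have hne : T₁ ≠ T₂ := fun he => hT₁.vertexSum_notMem (he ▸ h')
  obtain ⟨z, hz⟩ := hΔ.exists_inter_eq_singleton h₁ h₂ hne
  have hz' : z ∈ T₁ ∩ T₂ := hz ▸ rfl
  have hy₁ := hT₁.vertexSum_add_add_mem h hz'.1
    (ne_of_mem_of_not_mem hz'.2 hT₂.vertexSum_notMem).symm
  have hy₂ := hT₂.vertexSum_add_add_mem h' hz'.2
    (ne_of_mem_of_not_mem hz'.1 hT₁.vertexSum_notMem).symm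
  rw [add_comm (vertexSum T₂)] at hy₂
  have hy : vertexSum T₁ + vertexSum T₂ + z ∈ T₁ ∩ T₂ := ⟨hy₁, hy₂⟩
  rw [hz, Set.mem_singleton_iff, add_eq_right] at hy
  have hPQ : vertexSum T₁ = vertexSum T₂ := CharTwo.add_eq_zero.1 hy
  exact hT₁.vertexSum_notMem (hPQ ▸ h)

theorem image_vertexSum (hΔ : FanoFamily Δ) (htri : ∀ T ∈ Δ, IsTriangle T)
    (hcard : Δ.ncard = 7) : vertexSum '' Δ = {P | P ≠ 0} := by
  refine Set.eq_of_subset_of_ncard_le ?_ ?_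
  · rintro _ ⟨T, hT, rfl⟩
    exact (htri T hT).vertexSum_ne_zero
  · rw [(hΔ.injOn_vertexSum htri).ncard_image, hcard, Set.ncard_eq_toFinset_card']
    rfl

theorem exists_realizes (hΔ : FanoFamily Δ) (htri : ∀ T ∈ Δ, IsTriangle T)
    (hcard : Δ.ncard = 7) : ∃ α, Realizes Δ α := by
  have hform : ∀ P : V, ∃ f : V →ₗ[ZMod 2] ZMod 2, P ≠ 0 →
      f P = 1 ∧ {Q | Q ≠ 0 ∧ Q ≠ P ∧ f Q = 1} ∈ Δ := by
    intro P
    by_cases hP : P = 0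
    · exact ⟨0, fun h => (h hP).elim⟩
    obtain ⟨T, hT, rfl⟩ : P ∈ vertexSum '' Δ := by rwa [hΔ.image_vertexSum htri hcard]
    obtain ⟨f, hf, hfT⟩ := (htri T hT).exists_deltaSet_eq
    exact ⟨f, fun _ => ⟨hf, by rwa [hfT]⟩⟩
  choose f hf using hform
  refine ⟨Function.update f 0 0, by simp, fun P hP => ?_⟩
  simpa [DeltaSet, Function.update_of_ne hP] using hf P hP

end FanoFamily

namespace Realizes

variable {Δ : Set (Set V)}

variable {α : V → V →ₗ[ZMod 2] ZMod 2}

theorem eq_setOf (hΔ : FanoFamily Δ) (htri : ∀ T ∈ Δ, IsTriangle T) (hα : Realizes Δ α) :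
    Δ = {S : Set V | ∃ P : V, P ≠ 0 ∧ S = DeltaSet α P} := by
  ext T
  constructor
  · intro hT
    have hmem := (hα.2 _ (htri T hT).vertexSum_ne_zero).2
    refine ⟨vertexSum T, (htri T hT).vertexSum_ne_zero, hΔ.injOn_vertexSum htri hT hmem ?_⟩
    rw [vertexSum_deltaSet (htri _ hmem)]
  · rintro ⟨P, hP, rfl⟩
    exact (hα.2 P hP).2

theorem eq {β : V → V →ₗ[ZMod 2] ZMod 2} (hΔ : FanoFamily Δ) (htri : ∀ T ∈ Δ, IsTriangle T)
    (hα : Realizes Δ α) (hβ : Realizes Δ β) : α = β := by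
  funext P
  by_cases hP : P = 0
  · rw [hP, hα.1, hβ.1]
  obtain ⟨hαP, hα₁⟩ := hα.2 P hP
  obtain ⟨hβP, hβ₁⟩ := hβ.2 P hP
  refine eq_of_deltaSet_eq hαP hβP (hΔ.injOn_vertexSum htri hα₁ hβ₁ ?_)
  rw [vertexSum_deltaSet (htri _ hα₁), vertexSum_deltaSet (htri _ hβ₁)]

theorem isOrientedMap (hΔ : FanoFamily Δ) (htri : ∀ T ∈ Δ, IsTriangle T) (hα : Realizes Δ α) :
    IsOrientedMap α := by
  classical
  refine ⟨fun P hP => by simpa using (hα.2 P hP).1, fun P Q hP hQ hPQ => ?_, hα.1⟩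
  have hsum : ∀ P, P ≠ 0 → vertexSum (DeltaSet α P) = P :=
    fun P hP => vertexSum_deltaSet (htri _ (hα.2 P hP).2)
  have hasymm : ∀ P, P ≠ 0 → ∀ Q, Q ≠ 0 → Q ∈ DeltaSet α P → P ∉ DeltaSet α Q := by
    intro P hP Q hQ h
    have := hΔ.vertexSum_notMem_of_mem htri (hα.2 P hP).2 (hα.2 Q hQ).2
    rw [hsum P hP, hsum Q hQ] at this
    exact this h
  set s : Finset V := {P | P ≠ 0}
  have hs : ∀ {P}, P ∈ s ↔ P ≠ 0 := by simp [s]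
  have hdeg : ∀ P ∈ s, #{Q ∈ s | Q ∈ DeltaSet α P} = 3 := by
    intro P hP
    have hset : (↑({Q ∈ s | Q ∈ DeltaSet α P}) : Set V) = DeltaSet α P := by
      ext Q
      simpa [hs] using fun h : Q ∈ DeltaSet α P => h.1
    rw [← Set.ncard_coe_finset, hset, ncard_deltaSet (hα.2 P (hs.1 hP)).1]
  have hone : α P Q = 1 ∨ α Q P = 1 :=
    (Finset.rel_or_rel_of_card_filter_eq (r := fun P Q => Q ∈ DeltaSet α P) rfl hdeg
      (fun P hP Q hQ => hasymm P (hs.1 hP) Q (hs.1 hQ)) (hs.2 hP) (hs.2 hQ) hPQ).imp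
      (·.2.2) (·.2.2)
  exact ZMod.add_eq_one_of_eq_one_or hone fun ⟨h₁, h₂⟩ =>
    hasymm P hP Q hQ ⟨hQ, Ne.symm hPQ, h₁⟩ ⟨hP, hPQ, h₂⟩

end Realizes

/-- any set of seven triangles satisfying the Fano axioms is the set of the
`Δ_P` of a unique oriented map. -/
theorem stmt_9 (Δ : Set (Set V)) (hcard : Δ.ncard = 7)
    (htri : ∀ T ∈ Δ, IsTriangle T) (hfano : FanoFamily Δ) :
    ∃! α : V → V →ₗ[ZMod 2] ZMod 2, IsOrientedMap α ∧
      Δ = {S : Set V | ∃ P : V, P ≠ 0 ∧ S = DeltaSet α P} := by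
  obtain ⟨α, hα⟩ := hfano.exists_realizes htri hcard
  refine ⟨α, ⟨hα.isOrientedMap hfano htri, hα.eq_setOf hfano htri⟩, ?_⟩
  rintro β ⟨hβ, hβΔ⟩
  exact (realizes_of_isOrientedMap hβ hβΔ).eq hfano htri hα
end

section
/- Let n be a linear form on V. For an oriented map α, define α′ by letting α′_P be the linear form Q ↦ α_P(Q) + n(P)·n(Q) on V. Then α′ is an n-oriented map, and the map α ↦ α′ is a bijection from F_0 (the set of oriented maps) onto F_n (the set of n-oriented maps). -/
open Finset

/-- `α ↦ α′`, `α′_P(Q) = α_P(Q) + n(P)n(Q)`, maps oriented maps to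
`n`-oriented maps and is a bijection from `F₀` onto `F_n`. -/
theorem stmt_10 (n : V →ₗ[ZMod 2] ZMod 2) :
    (∀ α : V → V →ₗ[ZMod 2] ZMod 2, IsOrientedMap α → IsNOrientedMap n (nTransform n α)) ∧
    Set.BijOn (nTransform n) {α | IsOrientedMap α} {α | IsNOrientedMap n α} := by
  have hsq : ∀ x : ZMod 2, x * x = x := by decide
  have hadd : ∀ x y : ZMod 2, x + y + y = x := by decide
  have fwd : ∀ α : V → V →ₗ[ZMod 2] ZMod 2,
      IsOrientedMap α → IsNOrientedMap n (nTransform n α) := by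
    rintro α ⟨h1, h2, h3⟩
    refine ⟨?_, ?_, ?_⟩
    · intro P hP
      have := h1 P hP
      simp only [LinearMap.zero_apply, add_zero] at this
      simp only [nTransform, LinearMap.add_apply, LinearMap.smul_apply, smul_eq_mul,
        hsq (n P)]
      rw [hadd]
      simpa using this
    · intro P Q hP hQ hPQ
      have := h2 P Q hP hQ hPQ
      simp only [nTransform, LinearMap.add_apply, LinearMap.smul_apply, smul_eq_mul]
      calc α P Q + n P * n Q + (α Q P + n Q * n P)
          = (α P Q + α Q P) + (n P * n Q + n P * n Q) := by ring
        _ = 1 := by rw [this, ← add_assoc]; exact hadd 1 _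
    · simp [nTransform, h3]
  have invol : ∀ α : V → V →ₗ[ZMod 2] ZMod 2, nTransform n (nTransform n α) = α := by
    intro α
    funext P
    ext Q
    simp only [nTransform, LinearMap.add_apply, LinearMap.smul_apply, smul_eq_mul]
    exact hadd _ _
  have bwd : ∀ α : V → V →ₗ[ZMod 2] ZMod 2,
      IsNOrientedMap n α → IsOrientedMap (nTransform n α) := by
    rintro α ⟨h1, h2, h3⟩
    refine ⟨?_, ?_, ?_⟩
    · intro P hP
      have := h1 P hP
      simp only [nTransform, LinearMap.add_apply, LinearMap.smul_apply, smul_eq_mul,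
        LinearMap.zero_apply, add_zero, hsq (n P)]
      exact this
    · intro P Q hP hQ hPQ
      have := h2 P Q hP hQ hPQ
      simp only [nTransform, LinearMap.add_apply, LinearMap.smul_apply, smul_eq_mul]
      calc α P Q + n P * n Q + (α Q P + n Q * n P)
          = (α P Q + α Q P) + (n P * n Q + n P * n Q) := by ring
        _ = 1 := by rw [this, ← add_assoc]; exact hadd 1 _
    · simp [nTransform, h3]
  refine ⟨fwd, fwd, fun a ha b hb hab => ?_, fun β hβ => ?_⟩
  · have := congrArg (nTransform n) hab
    rwa [invol, invol] at this
  · exact ⟨nTransform n β, bwd β hβ, invol β⟩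
end

section
/- (i) Let α and β be oriented maps. Then the function Δ : V × V → ZMod 2 defined by Δ(P,Q) = α_P(Q) + β_P(Q) for P,Q ∈ F and Δ(P,Q) = 0 whenever P = 0 or Q = 0 is a symmetric bilinear form on V satisfying Δ(X,X) = 0 for all X ∈ V. (ii) Conversely, if α is an oriented map and Δ is a symmetric bilinear form on V with Δ(X,X) = 0 for all X ∈ V, then β defined by β_P(Q) = Δ(P,Q) + α_P(Q) is an oriented map. -/
open Finset

/-- The difference `Δ(P,Q) = α_P(Q) + β_P(Q)` on `F × F`, extended by `0` when `P = 0` or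
`Q = 0`. -/
def diffForm (α β : V → V →ₗ[ZMod 2] ZMod 2) : V → V → ZMod 2 :=
  fun P Q => if P = 0 ∨ Q = 0 then 0 else α P Q + β P Q

/-- (i) the difference of two oriented maps is a symmetric bilinear form
vanishing on the diagonal; (ii) adding such a bilinear form to an oriented map gives an
oriented map. -/
theorem stmt_11 :
    (∀ α β : V → V →ₗ[ZMod 2] ZMod 2, IsOrientedMap α → IsOrientedMap β →
      (∀ P Q : V, diffForm α β P Q = diffForm α β Q P) ∧
      (∀ X : V, diffForm α β X X = 0) ∧
      (∃ B : V →ₗ[ZMod 2] V →ₗ[ZMod 2] ZMod 2, ∀ P Q : V, B P Q = diffForm α β P Q)) ∧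
    (∀ (α : V → V →ₗ[ZMod 2] ZMod 2) (B : V →ₗ[ZMod 2] V →ₗ[ZMod 2] ZMod 2),
      IsOrientedMap α → (∀ X Y : V, B X Y = B Y X) → (∀ X : V, B X X = 0) →
      IsOrientedMap (fun P => α P + B P)) := by
  have key : ∀ a b c d : ZMod 2, a + c = 1 → b + d = 1 → a + b = c + d := by decide
  have key2 : ∀ a b : ZMod 2, a = 1 → b = 1 → a + b = 0 := by decide
  have key3 : ∀ a b c : ZMod 2, a + c = 1 → (a + b) + (c + b) = 1 := by decide
  constructor
  · intro α β hα hβ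
    obtain ⟨hα1, hα2, hα0⟩ := hα
    obtain ⟨hβ1, hβ2, hβ0⟩ := hβ
    have hαd : ∀ P : V, P ≠ 0 → α P P = 1 := by
      intro P hP; have := hα1 P hP; simpa using this
    have hβd : ∀ P : V, P ≠ 0 → β P P = 1 := by
      intro P hP; have := hβ1 P hP; simpa using this
    have sym : ∀ P Q : V, diffForm α β P Q = diffForm α β Q P := by
      intro P Q
      unfold diffForm
      by_cases hP : P = 0
      · simp [hP]
      by_cases hQ : Q = 0
      · simp [hP, hQ]
      rw [if_neg (by tauto), if_neg (by tauto)]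
      by_cases hPQ : P = Q
      · rw [hPQ]
      · exact key _ _ _ _ (hα2 P Q hP hQ hPQ) (hβ2 P Q hP hQ hPQ)
    have diag : ∀ X : V, diffForm α β X X = 0 := by
      intro X
      unfold diffForm
      by_cases hX : X = 0
      · simp [hX]
      · rw [if_neg (by tauto)]
        exact key2 _ _ (hαd X hX) (hβd X hX)
    refine ⟨sym, diag, ?_⟩
    have eq2 : ∀ P Q : V, diffForm α β P Q = if P = 0 then 0 else (α P + β P) Q := by
      intro P Q
      unfold diffForm
      by_cases hP : P = 0
      · simp [hP]
      by_cases hQ : Q = 0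
      · simp [hP, hQ]
      · rw [if_neg (by tauto), if_neg hP]; simp
    have add2 : ∀ P Q Q' : V,
        diffForm α β P (Q + Q') = diffForm α β P Q + diffForm α β P Q' := by
      intro P Q Q'
      rw [eq2, eq2, eq2]
      by_cases hP : P = 0
      · simp [hP]
      · simp [hP, map_add]
    have smul2 : ∀ (c : ZMod 2) (P Q : V),
        diffForm α β P (c • Q) = c * diffForm α β P Q := by
      intro c P Q
      have hc : c = 0 ∨ c = 1 := by revert c; decide
      rcases hc with hc | hc
      · rw [hc, zero_smul, zero_mul, eq2]
        by_cases hP : P = 0 <;> simp [hP]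
      · rw [hc, one_smul, one_mul]
    refine ⟨LinearMap.mk₂ (ZMod 2) (diffForm α β)
      (fun P P' Q => by rw [sym (P + P') Q, sym P Q, sym P' Q]; exact add2 Q P P')
      (fun c P Q => by rw [sym (c • P) Q, sym P Q]; exact smul2 c Q P)
      (fun P Q Q' => add2 P Q Q') (fun c P Q => smul2 c P Q), ?_⟩
    intro P Q; rfl
  · intro α B hα hBsym hBdiag
    obtain ⟨hα1, hα2, hα0⟩ := hα
    refine ⟨?_, ?_, ?_⟩
    · intro P hP
      have h1 : α P P = 1 := by have := hα1 P hP; simpa using this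
      simp [h1, hBdiag P]
    · intro P Q hP hQ hPQ
      have h1 := hα2 P Q hP hQ hPQ
      simp only [LinearMap.add_apply]
      rw [hBsym Q P]
      exact key3 _ _ _ h1
    · simp [hα0]
end

section
/- Let n be a linear form on V. The additive group of symmetric bilinear forms B on V with B(X,X) = 0 for all X ∈ V acts simply transitively on F_n via (B·α)_P(Q) = α_P(Q) + B(P,Q); in particular, F_n has exactly 8 elements. -/
open Finset

section Aux

/-- dot-product style pairing -/
def dotf : V →ₗ[ZMod 2] V →ₗ[ZMod 2] ZMod 2 :=
  LinearMap.mk₂ (ZMod 2) (fun a X => a 0 * X 0 + a 1 * X 1 + a 2 * X 2)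
    (by intros; simp [Pi.add_apply]; ring)
    (by intros; simp [Pi.smul_apply, smul_eq_mul]; ring)
    (by intros; simp [Pi.add_apply]; ring)
    (by intros; simp [Pi.smul_apply, smul_eq_mul]; ring)

def gtab : V → V := fun P =>
  if P = ![0,0,1] then ![0,0,1]
  else if P = ![0,1,0] then ![0,1,1]
  else if P = ![0,1,1] then ![1,1,0]
  else if P = ![1,0,0] then ![1,1,1]
  else if P = ![1,0,1] then ![1,0,0]
  else if P = ![1,1,0] then ![1,0,1]
  else if P = ![1,1,1] then ![0,1,0]
  else 0

def alpha0 : V → V →ₗ[ZMod 2] ZMod 2 := fun P => dotf (gtab P)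

lemma alpha0_oriented : IsNOrientedMap 0 alpha0 := by
  refine ⟨?_, ?_, ?_⟩
  · decide
  · decide
  · decide

lemma alphaN_oriented (n : V →ₗ[ZMod 2] ZMod 2) :
    IsNOrientedMap n (fun P => alpha0 P + n P • n) := by
  obtain ⟨h1, h2, h3⟩ := alpha0_oriented
  refine ⟨?_, ?_, ?_⟩
  · intro P hP
    have ha : alpha0 P P = 1 := by simpa using h1 P hP
    simp only [LinearMap.add_apply, LinearMap.smul_apply, smul_eq_mul, ha]
    have : ∀ b : ZMod 2, 1 + b * b + b = 1 := by decide
    exact this (n P)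
  · intro P Q hP hQ hPQ
    have h := h2 P Q hP hQ hPQ
    simp only [LinearMap.add_apply, LinearMap.smul_apply, smul_eq_mul]
    have : ∀ a c p q : ZMod 2, a + c = 1 → a + p * q + (c + q * p) = 1 := by decide
    exact this _ _ _ _ h
  · show alpha0 0 + n 0 • n = 0
    rw [h3, map_zero, zero_smul, add_zero]

def bform (t : Fin 3 → ZMod 2) : V →ₗ[ZMod 2] V →ₗ[ZMod 2] ZMod 2 :=
  LinearMap.mk₂ (ZMod 2)
    (fun X Y => t 0 * (X 0 * Y 1 + X 1 * Y 0) + t 1 * (X 0 * Y 2 + X 2 * Y 0)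
      + t 2 * (X 1 * Y 2 + X 2 * Y 1))
    (by intros; simp [Pi.add_apply]; ring)
    (by intros; simp [Pi.smul_apply, smul_eq_mul]; ring)
    (by intros; simp [Pi.add_apply]; ring)
    (by intros; simp [Pi.smul_apply, smul_eq_mul]; ring)

def ev : Fin 3 → V := fun i j => if j = i then 1 else 0

lemma repr_eq (X : V) : X = X 0 • ev 0 + X 1 • ev 1 + X 2 • ev 2 := by
  funext j
  fin_cases j <;> simp [ev]

lemma two_zmod (a : ZMod 2) : a + a = 0 := by
  fin_cases a <;> decide

lemma bform_apply (t : Fin 3 → ZMod 2) (X Y : V) :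
    bform t X Y = t 0 * (X 0 * Y 1 + X 1 * Y 0) + t 1 * (X 0 * Y 2 + X 2 * Y 0)
      + t 2 * (X 1 * Y 2 + X 2 * Y 1) := rfl

lemma bform_symm (t : Fin 3 → ZMod 2) (X Y : V) : bform t X Y = bform t Y X := by
  rw [bform_apply, bform_apply]; ring

lemma bform_diag (t : Fin 3 → ZMod 2) (X : V) : bform t X X = 0 := by
  rw [bform_apply, mul_comm (X 1) (X 0), mul_comm (X 2) (X 0), mul_comm (X 2) (X 1),
    two_zmod, two_zmod, two_zmod]
  ring

lemma bform_ev (t : Fin 3 → ZMod 2) :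
    bform t (ev 0) (ev 1) = t 0 ∧ bform t (ev 0) (ev 2) = t 1 ∧
      bform t (ev 1) (ev 2) = t 2 := by
  refine ⟨?_, ?_, ?_⟩ <;> · rw [bform_apply]; simp [ev]

lemma expand_bilin (B : V →ₗ[ZMod 2] V →ₗ[ZMod 2] ZMod 2) (X Y : V) :
    B X Y = X 0 * Y 0 * B (ev 0) (ev 0) + X 0 * Y 1 * B (ev 0) (ev 1)
      + X 0 * Y 2 * B (ev 0) (ev 2) + X 1 * Y 0 * B (ev 1) (ev 0)
      + X 1 * Y 1 * B (ev 1) (ev 1) + X 1 * Y 2 * B (ev 1) (ev 2)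
      + X 2 * Y 0 * B (ev 2) (ev 0) + X 2 * Y 1 * B (ev 2) (ev 1)
      + X 2 * Y 2 * B (ev 2) (ev 2) := by
  conv_lhs => rw [repr_eq X, repr_eq Y]
  simp [map_add, map_smul, smul_eq_mul]
  ring

end Aux

/-- the additive group of symmetric bilinear forms vanishing on the diagonal
acts simply transitively on `F_n` via `(B·α)_P = α_P + B(P,·)`; in particular
`Card F_n = 8`. -/
theorem stmt_12 (n : V →ₗ[ZMod 2] ZMod 2) :
    (∀ B : V →ₗ[ZMod 2] V →ₗ[ZMod 2] ZMod 2,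
      (∀ X Y : V, B X Y = B Y X) → (∀ X : V, B X X = 0) →
      ∀ α : V → V →ₗ[ZMod 2] ZMod 2, IsNOrientedMap n α →
        IsNOrientedMap n (fun P => α P + B P)) ∧
    (∀ α β : V → V →ₗ[ZMod 2] ZMod 2, IsNOrientedMap n α → IsNOrientedMap n β →
      ∃! B : V →ₗ[ZMod 2] V →ₗ[ZMod 2] ZMod 2,
        ((∀ X Y : V, B X Y = B Y X) ∧ (∀ X : V, B X X = 0)) ∧
        (fun P => α P + B P) = β) ∧
    Set.ncard {α : V → V →ₗ[ZMod 2] ZMod 2 | IsNOrientedMap n α} = 8 := by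
  have hpart1 : ∀ B : V →ₗ[ZMod 2] V →ₗ[ZMod 2] ZMod 2,
      (∀ X Y : V, B X Y = B Y X) → (∀ X : V, B X X = 0) →
      ∀ α : V → V →ₗ[ZMod 2] ZMod 2, IsNOrientedMap n α →
        IsNOrientedMap n (fun P => α P + B P) := by
    intro B hsym hdiag α ⟨h1, h2, h3⟩
    refine ⟨?_, ?_, ?_⟩
    · intro P hP
      show α P P + B P P + n P = 1
      rw [hdiag P, add_zero]
      exact h1 P hP
    · intro P Q hP hQ hPQ
      show α P Q + B P Q + (α Q P + B Q P) = 1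
      rw [hsym Q P]
      have key : ∀ a b c : ZMod 2, a + c = 1 → a + b + (c + b) = 1 := by decide
      exact key _ _ _ (h2 P Q hP hQ hPQ)
    · show α 0 + B 0 = 0
      rw [h3, map_zero, add_zero]
  have hpart2 : ∀ α β : V → V →ₗ[ZMod 2] ZMod 2, IsNOrientedMap n α → IsNOrientedMap n β →
      ∃! B : V →ₗ[ZMod 2] V →ₗ[ZMod 2] ZMod 2,
        ((∀ X Y : V, B X Y = B Y X) ∧ (∀ X : V, B X X = 0)) ∧
        (fun P => α P + B P) = β := by
    intro α β hα hβ
    have hsymD : ∀ P Q : V, β P Q + α P Q = β Q P + α Q P := by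
      intro P Q
      by_cases hP : P = 0
      · subst hP
        rw [hα.2.2, hβ.2.2, map_zero, map_zero]
        simp
      by_cases hQ : Q = 0
      · subst hQ
        rw [hα.2.2, hβ.2.2, map_zero, map_zero]
        simp
      by_cases hPQ : P = Q
      · subst hPQ; rfl
      · have h1 := hα.2.1 P Q hP hQ hPQ
        have h2 := hβ.2.1 P Q hP hQ hPQ
        have key : ∀ a b c d : ZMod 2, a + b = 1 → c + d = 1 → c + a = d + b := by decide
        exact key _ _ _ _ h1 h2
    refine ⟨LinearMap.mk₂ (ZMod 2) (fun P Q => β P Q + α P Q)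
      (by
        intro m m' x
        beta_reduce
        rw [hsymD (m + m') x, map_add, map_add, hsymD m x, hsymD m' x]
        ring)
      (by
        intro c m x
        beta_reduce
        rw [hsymD (c • m) x, map_smul, map_smul, hsymD m x, smul_add])
      (by
        intro m x y
        beta_reduce
        rw [map_add, map_add]
        ring)
      (by
        intro c m x
        beta_reduce
        rw [map_smul, map_smul, smul_add]), ⟨⟨?_, ?_⟩, ?_⟩, ?_⟩
    · intro X Y
      exact hsymD X Y
    · intro X
      show β X X + α X X = 0
      by_cases hX : X = 0
      · subst hX
        rw [hα.2.2, hβ.2.2]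
        simp
      · have h1 := hα.1 X hX
        have h2 := hβ.1 X hX
        have key : ∀ a b c : ZMod 2, a + c = 1 → b + c = 1 → b + a = 0 := by decide
        exact key _ _ _ h1 h2
    · funext P
      apply LinearMap.ext
      intro Q
      show α P Q + (β P Q + α P Q) = β P Q
      have key : ∀ a b : ZMod 2, a + (b + a) = b := by decide
      exact key _ _
    · intro B' ⟨_, hB'⟩
      apply LinearMap.ext
      intro P
      apply LinearMap.ext
      intro Q
      have h := congrFun hB' P
      have h' : α P Q + B' P Q = β P Q := by rw [← LinearMap.add_apply, h]
      show B' P Q = β P Q + α P Q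
      have key : ∀ a b c : ZMod 2, a + b = c → b = c + a := by decide
      exact key _ _ _ h'
  refine ⟨hpart1, hpart2, ?_⟩
  set α' : V → V →ₗ[ZMod 2] ZMod 2 := fun P => alpha0 P + n P • n with hα'def
  have hα' : IsNOrientedMap n α' := alphaN_oriented n
  set T : Set (V →ₗ[ZMod 2] V →ₗ[ZMod 2] ZMod 2) :=
    {B | (∀ X Y : V, B X Y = B Y X) ∧ (∀ X : V, B X X = 0)} with hTdef
  have hf : Function.Bijective (fun t : Fin 3 → ZMod 2 =>
      (⟨bform t, bform_symm t, bform_diag t⟩ : T)) := by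
    constructor
    · intro t t' h
      have hb : bform t = bform t' := congrArg Subtype.val h
      funext i
      fin_cases i
      · have : bform t (ev 0) (ev 1) = bform t' (ev 0) (ev 1) := by rw [hb]
        rwa [(bform_ev t).1, (bform_ev t').1] at this
      · have : bform t (ev 0) (ev 2) = bform t' (ev 0) (ev 2) := by rw [hb]
        rwa [(bform_ev t).2.1, (bform_ev t').2.1] at this
      · have : bform t (ev 1) (ev 2) = bform t' (ev 1) (ev 2) := by rw [hb]
        rwa [(bform_ev t).2.2, (bform_ev t').2.2] at this
    · rintro ⟨B, hs, hd⟩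
      refine ⟨![B (ev 0) (ev 1), B (ev 0) (ev 2), B (ev 1) (ev 2)], ?_⟩
      apply Subtype.ext
      apply LinearMap.ext
      intro X
      apply LinearMap.ext
      intro Y
      show bform _ X Y = B X Y
      rw [bform_apply, expand_bilin B X Y, hd, hd, hd,
        hs (ev 1) (ev 0), hs (ev 2) (ev 0), hs (ev 2) (ev 1)]
      simp [Matrix.cons_val_zero, Matrix.cons_val_one, Matrix.head_cons]
      ring
  have hTcard : Nat.card T = 8 := by
    rw [← Nat.card_eq_of_bijective _ hf, Nat.card_eq_fintype_card]
    decide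
  have hg_inj : Function.Injective
      (fun B : V →ₗ[ZMod 2] V →ₗ[ZMod 2] ZMod 2 => fun P => α' P + B P) := by
    intro B B' h
    apply LinearMap.ext
    intro P
    exact add_left_cancel (congrFun h P)
  have hS : {α : V → V →ₗ[ZMod 2] ZMod 2 | IsNOrientedMap n α}
      = (fun B : V →ₗ[ZMod 2] V →ₗ[ZMod 2] ZMod 2 => fun P => α' P + B P) '' T := by
    ext α
    constructor
    · intro hα
      obtain ⟨B, ⟨⟨hsym, hdiag⟩, heq⟩, -⟩ := hpart2 α' α hα' hα
      exact ⟨B, ⟨hsym, hdiag⟩, heq⟩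
    · rintro ⟨B, ⟨hs, hd⟩, rfl⟩
      exact hpart1 B hs hd α' hα'
  rw [hS, Set.ncard_image_of_injective _ hg_inj, ← Nat.card_coe_set_eq, hTcard]
end

section
/- Let α be an oriented map. Then (O_F, 1, e^α) is a composition algebra in which the future →P is a line for every P ∈ F, and (O_F, 1, −e^α) is a composition algebra in which the past ←P is a line for every P ∈ F. -/
open Finset

-- ===================== auxiliary lemmas =====================

lemma eSign_vals : ∀ x : ZMod 2, eSign x = 1 ∨ eSign x = -1 := by decide
lemma eSign_eq_one_iff : ∀ x : ZMod 2, eSign x = 1 ↔ x = 0 := by decide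
lemma eSign_of_add_one : ∀ x y : ZMod 2, x + y = 1 → eSign x = -eSign y := by decide
lemma eSign_mul : ∀ x y : ZMod 2, eSign x * eSign y = eSign (x + y) := by decide
lemma zmod2_cases : ∀ x : ZMod 2, x = 0 ∨ x = 1 := by decide
lemma zmod2_addself : ∀ x y : ZMod 2, x + y + y = x := by decide
lemma zmod2_quad : ∀ p q r s u v : ZMod 2, p + q = 1 → u = 1 → v = 1 →
    (r + (q + v + s)) + ((u + p) + r + s) = 1 := by decide

lemma V.add_self (v : V) : v + v = 0 := by
  funext i
  have h : ∀ x : ZMod 2, x + x = 0 := by decide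
  exact h (v i)

lemma V.add_eq_zero_iff {v w : V} : v + w = 0 ↔ v = w := by
  constructor
  · intro h
    have h2 : v + w + w = w := by rw [h, zero_add]
    rwa [add_assoc, V.add_self, add_zero] at h2
  · rintro rfl; exact V.add_self v

lemma V.cancel_right {a b : V} (h : a + b = a) : b = 0 :=
  add_left_cancel (h.trans (add_zero a).symm)

lemma kernel_line (b : Fin 3 → ZMod 2) (hb : b ≠ 0) :
    IsLine {Q : V | Q ≠ 0 ∧ Q 0 * b 0 + Q 1 * b 1 + Q 2 * b 2 = 0} := by
  have hset : ∀ p q r : V,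
      (∀ x : V, (x ≠ 0 ∧ x 0 * b 0 + x 1 * b 1 + x 2 * b 2 = 0) ↔ (x = p ∨ x = q ∨ x = r)) →
      {Q : V | Q ≠ 0 ∧ Q 0 * b 0 + Q 1 * b 1 + Q 2 * b 2 = 0} = ({p, q, r} : Set V) := by
    intro p q r h
    ext x
    simp only [Set.mem_setOf_eq, Set.mem_insert_iff, Set.mem_singleton_iff]
    exact h x
  rcases zmod2_cases (b 0) with h0 | h0 <;> rcases zmod2_cases (b 1) with h1 | h1 <;>
    rcases zmod2_cases (b 2) with h2 | h2
  · exact absurd (funext fun i => by fin_cases i <;> assumption) hb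
  · exact ⟨![1,0,0], ![0,1,0], ![1,1,0], by decide, by decide, by decide, by decide, by decide,
      by decide, by decide, hset _ _ _ (by rw [h0, h1, h2]; decide)⟩
  · exact ⟨![1,0,0], ![0,0,1], ![1,0,1], by decide, by decide, by decide, by decide, by decide,
      by decide, by decide, hset _ _ _ (by rw [h0, h1, h2]; decide)⟩
  · exact ⟨![1,0,0], ![0,1,1], ![1,1,1], by decide, by decide, by decide, by decide, by decide,
      by decide, by decide, hset _ _ _ (by rw [h0, h1, h2]; decide)⟩
  · exact ⟨![0,1,0], ![0,0,1], ![0,1,1], by decide, by decide, by decide, by decide, by decide,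
      by decide, by decide, hset _ _ _ (by rw [h0, h1, h2]; decide)⟩
  · exact ⟨![0,1,0], ![1,0,1], ![1,1,1], by decide, by decide, by decide, by decide, by decide,
      by decide, by decide, hset _ _ _ (by rw [h0, h1, h2]; decide)⟩
  · exact ⟨![0,0,1], ![1,1,0], ![1,1,1], by decide, by decide, by decide, by decide, by decide,
      by decide, by decide, hset _ _ _ (by rw [h0, h1, h2]; decide)⟩
  · exact ⟨![1,1,0], ![1,0,1], ![0,1,1], by decide, by decide, by decide, by decide, by decide,
      by decide, by decide, hset _ _ _ (by rw [h0, h1, h2]; decide)⟩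

lemma expMap_eq (α : V → V →ₗ[ZMod 2] ZMod 2) {P Q : V} (hP : P ≠ 0) (hQ : Q ≠ 0)
    (hPQ : P ≠ Q) : expMap α P Q = eSign (α P Q) := by
  unfold expMap
  rw [if_pos ⟨hP, hQ, hPQ⟩]

section Star
variable {𝔽 : Type*} [Field 𝔽] (ε : V → V → ℤ)

lemma structC_zl (Q : V) : structC 𝔽 (fun _ => 1) ε 0 Q = 1 := by simp [structC]

lemma structC_zr (P : V) : structC 𝔽 (fun _ => 1) ε P 0 = 1 := by simp [structC]

lemma structC_diag {P : V} (h : P ≠ 0) : structC 𝔽 (fun _ => 1) ε P P = -1 := by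
  simp [structC, h]

lemma structC_ne {P Q : V} (hP : P ≠ 0) (hQ : Q ≠ 0) (h : P ≠ Q) :
    structC 𝔽 (fun _ => 1) ε P Q = (ε P Q : 𝔽) := by
  simp [structC, hP, hQ, h]

variable
  (hval : ∀ P Q : V, P ≠ 0 → Q ≠ 0 → P ≠ Q → ε P Q = 1 ∨ ε P Q = -1)
  (hsym : ∀ P Q : V, P ≠ 0 → Q ≠ 0 → P ≠ Q → ε Q P = -ε P Q)
  (hline : ∀ P Q : V, P ≠ 0 → Q ≠ 0 → P ≠ Q → ε P (P + Q) = -ε P Q)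
  (hquad : ∀ A B C : V, A ≠ 0 → B ≠ 0 → C ≠ 0 → A ≠ B → A ≠ C → B ≠ C → A + B + C ≠ 0 →
      ε A C * ε B (A + B + C) = -(ε A (A + B + C) * ε B C))

include hval hsym hline hquad in
lemma star_lemma (A B C : V) (hAB : A ≠ B) :
    structC 𝔽 (fun _ => 1) ε A C * structC 𝔽 (fun _ => 1) ε B (A + B + C)
      + structC 𝔽 (fun _ => 1) ε A (A + B + C) * structC 𝔽 (fun _ => 1) ε B C = 0 := by
  obtain ⟨D, hD⟩ : ∃ D, A + B + C = D := ⟨_, rfl⟩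
  rw [hD]
  by_cases hA : A = 0
  · subst hA
    rw [zero_add] at hD
    have hB : B ≠ 0 := fun h => hAB h.symm
    rw [structC_zl, structC_zl, one_mul, one_mul]
    by_cases hC : C = 0
    · subst hC; rw [add_zero] at hD; subst hD
      rw [structC_diag ε hB, structC_zr]; ring
    · by_cases hCB : C = B
      · subst hCB
        rw [V.add_self] at hD; subst hD
        rw [structC_diag ε hC, structC_zr]; ring
      · have hBC : B ≠ C := Ne.symm hCB
        have hD0 : D ≠ 0 := fun h => hCB (V.add_eq_zero_iff.mp (hD.trans h)).symm
        have hBD : B ≠ D := fun h => hC (V.cancel_right (hD.trans h.symm))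
        rw [structC_ne ε hB hD0 hBD, structC_ne ε hB hC hBC]
        have hl := hline B C hB hC hBC
        rw [hD] at hl
        rw [hl]; push_cast; ring
  · by_cases hB : B = 0
    · subst hB
      rw [add_zero] at hD
      rw [structC_zl, structC_zl, mul_one, mul_one]
      by_cases hC : C = 0
      · subst hC; rw [add_zero] at hD; subst hD
        rw [structC_diag ε hA, structC_zr]; ring
      · by_cases hCA : C = A
        · subst hCA
          rw [V.add_self] at hD; subst hD
          rw [structC_diag ε hC, structC_zr]; ring
        · have hAC : A ≠ C := Ne.symm hCA
          have hD0 : D ≠ 0 := fun h => hCA (V.add_eq_zero_iff.mp (hD.trans h)).symm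
          have hAD : A ≠ D := fun h => hC (V.cancel_right (hD.trans h.symm))
          rw [structC_ne ε hA hC hAC, structC_ne ε hA hD0 hAD]
          have hl := hline A C hA hC hAC
          rw [hD] at hl
          rw [hl]; push_cast; ring
    · by_cases hC : C = 0
      · subst hC
        rw [add_zero] at hD
        rw [structC_zr, structC_zr, one_mul, mul_one]
        have hD0 : D ≠ 0 := fun h => hAB (V.add_eq_zero_iff.mp (hD.trans h))
        have hAD : A ≠ D := fun h => hB (V.cancel_right (hD.trans h.symm))
        have hBD : B ≠ D := fun h => hA (V.cancel_right (by rw [add_comm] at hD; exact hD.trans h.symm))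
        rw [structC_ne ε hB hD0 hBD, structC_ne ε hA hD0 hAD]
        have hl1 := hline A B hA hB hAB
        have hl2 := hline B A hB hA (Ne.symm hAB)
        have hs := hsym A B hA hB hAB
        rw [hD] at hl1
        rw [add_comm B A, hD] at hl2
        rw [hl1, hl2, hs]; push_cast; ring
      · by_cases hD0 : D = 0
        · subst hD0
          have hC' : A + B = C := V.add_eq_zero_iff.mp hD
          have hCA : A ≠ C := fun h => hB (V.cancel_right (hC'.trans h.symm))
          have hCB : B ≠ C := fun h => hA (V.cancel_right (by rw [add_comm] at hC'; exact hC'.trans h.symm))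
          rw [structC_zr, structC_zr, one_mul, mul_one]
          rw [structC_ne ε hA hC hCA, structC_ne ε hB hC hCB]
          have hl1 := hline A B hA hB hAB
          have hl2 := hline B A hB hA (Ne.symm hAB)
          have hs := hsym A B hA hB hAB
          rw [hC'] at hl1
          rw [add_comm B A, hC'] at hl2
          rw [hl1, hl2, hs]; push_cast; ring
        · by_cases hAC : A = C
          · have hDB : D = B := by
              rw [← hD, ← hAC, add_comm A B, add_assoc, V.add_self, add_zero]
            rw [hDB, ← hAC]
            rw [structC_diag ε hA, structC_diag ε hB,
              structC_ne ε hA hB hAB, structC_ne ε hB hA (Ne.symm hAB)]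
            rw [hsym A B hA hB hAB]
            rcases hval A B hA hB hAB with h | h <;> rw [h] <;> push_cast <;> ring
          · by_cases hBC : B = C
            · have hDA : D = A := by
                rw [← hD, ← hBC, add_assoc, V.add_self, add_zero]
              rw [hDA, ← hBC]
              rw [structC_diag ε hA, structC_diag ε hB,
                structC_ne ε hA hB hAB, structC_ne ε hB hA (Ne.symm hAB)]
              rw [hsym A B hA hB hAB]
              rcases hval A B hA hB hAB with h | h <;> rw [h] <;> push_cast <;> ring
            · have hAD : A ≠ D := by
                intro h
                have h1 : A + (B + C) = A := by rw [← add_assoc, hD, ← h]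
                exact hBC (V.add_eq_zero_iff.mp (V.cancel_right h1))
              have hBD : B ≠ D := by
                intro h
                have h1 : B + (A + C) = B := by rw [← add_assoc, add_comm B A, hD, ← h]
                exact hAC (V.add_eq_zero_iff.mp (V.cancel_right h1))
              rw [structC_ne ε hA hC hAC, structC_ne ε hB hD0 hBD,
                structC_ne ε hA hD0 hAD, structC_ne ε hB hC hBC]
              have hq := hquad A B C hA hB hC hAB hAC hBC (by rw [hD]; exact hD0)
              rw [hD] at hq
              have hz : (ε A C * ε B D + ε A D * ε B C : ℤ) = 0 := by linarith
              have hz2 : ((ε A C * ε B D + ε A D * ε B C : ℤ) : 𝔽) = 0 := by rw [hz]; simp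
              push_cast at hz2
              exact hz2

end Star

open Finset in
lemma comp_of_star {𝔽 : Type*} [Field 𝔽] (hchar : (2 : 𝔽) ≠ 0) (ε : V → V → ℤ)
    (hsq : ∀ A C : V, structC 𝔽 (fun _ => 1) ε A C ^ 2 = 1)
    (hstar : ∀ A B C : V, A ≠ B →
      structC 𝔽 (fun _ => 1) ε A C * structC 𝔽 (fun _ => 1) ε B (A + B + C)
        + structC 𝔽 (fun _ => 1) ε A (A + B + C) * structC 𝔽 (fun _ => 1) ε B C = 0) :
    IsCompAlg 𝔽 (fun _ => 1) ε := by
  set c : V → V → 𝔽 := structC 𝔽 (fun _ => 1) ε with hc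
  intro Z W
  have hnorm : ∀ U : V → 𝔽, octNorm 𝔽 (fun _ => 1) U = ∑ X : V, U X ^ 2 := by
    intro U
    unfold octNorm
    refine Finset.sum_congr rfl fun X _ => ?_
    split_ifs <;> simp
  rw [hnorm, hnorm, hnorm]
  unfold octMul
  have step1 : ∑ X : V, (∑ Y : V, c Y (X + Y) * Z Y * W (X + Y)) ^ 2
      = ∑ A : V, ∑ B : V, ∑ X : V,
          (c A (X + A) * Z A * W (X + A)) * (c B (X + B) * Z B * W (X + B)) := by
    calc ∑ X : V, (∑ Y : V, c Y (X + Y) * Z Y * W (X + Y)) ^ 2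
        = ∑ X : V, ∑ A : V, ∑ B : V,
            (c A (X + A) * Z A * W (X + A)) * (c B (X + B) * Z B * W (X + B)) :=
          Finset.sum_congr rfl fun X _ => by rw [sq, Finset.sum_mul_sum]
      _ = ∑ A : V, ∑ X : V, ∑ B : V,
            (c A (X + A) * Z A * W (X + A)) * (c B (X + B) * Z B * W (X + B)) :=
          Finset.sum_comm
      _ = ∑ A : V, ∑ B : V, ∑ X : V,
            (c A (X + A) * Z A * W (X + A)) * (c B (X + B) * Z B * W (X + B)) :=
          Finset.sum_congr rfl fun A _ => Finset.sum_comm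
  rw [step1]
  -- reindex inner sum : X = C + A
  have step2 : ∀ A B : V, (∑ X : V,
        (c A (X + A) * Z A * W (X + A)) * (c B (X + B) * Z B * W (X + B)))
      = ∑ C : V, (c A C * Z A * W C) * (c B (A + B + C) * Z B * W (A + B + C)) := by
    intro A B
    refine (Fintype.sum_equiv (Equiv.addRight A) _ _ fun C => ?_).symm
    have h1 : Equiv.addRight A C + A = C := by
      show C + A + A = C
      rw [add_assoc, V.add_self, add_zero]
    have h2 : Equiv.addRight A C + B = A + B + C := by
      show C + A + B = A + B + C
      rw [add_comm C A, add_assoc, add_comm C B, ← add_assoc]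
    rw [h1, h2]
  simp only [step2]
  -- split diagonal
  have step3 : ∀ A : V, (∑ B : V, ∑ C : V,
        (c A C * Z A * W C) * (c B (A + B + C) * Z B * W (A + B + C)))
      = ∑ C : V, Z A ^ 2 * W C ^ 2 := by
    intro A
    rw [← Finset.add_sum_erase _ _ (Finset.mem_univ A)]
    have hz : ∑ B ∈ univ.erase A, ∑ C : V,
        (c A C * Z A * W C) * (c B (A + B + C) * Z B * W (A + B + C)) = 0 := by
      refine Finset.sum_eq_zero fun B hB => ?_
      have hAB : A ≠ B := (Finset.ne_of_mem_erase hB).symm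
      set S := ∑ C : V, (c A C * Z A * W C) * (c B (A + B + C) * Z B * W (A + B + C)) with hS
      have hK : ∀ C : V, A + B + (A + B + C) = C := by
        intro C
        rw [← add_assoc, V.add_self, zero_add]
      have hre : ∑ C : V, (c A (A + B + C) * Z A * W (A + B + C)) * (c B C * Z B * W C)
          = S := by
        rw [hS]
        refine Fintype.sum_equiv (Equiv.addLeft (A + B)) _ _ fun C => ?_
        show (c A (A + B + C) * Z A * W (A + B + C)) * (c B C * Z B * W C)
          = (c A (A + B + C) * Z A * W (A + B + C))
            * (c B (A + B + (A + B + C)) * Z B * W (A + B + (A + B + C)))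
        rw [hK]
      have hSS : S + S = 0 := by
        nth_rewrite 2 [← hre]
        rw [hS, ← Finset.sum_add_distrib]
        refine Finset.sum_eq_zero fun C _ => ?_
        linear_combination (Z A * W C * Z B * W (A + B + C)) * hstar A B C hAB
      have h2S : (2 : 𝔽) * S = 0 := by rw [two_mul]; exact hSS
      rcases mul_eq_zero.mp h2S with h | h
      · exact absurd h hchar
      · exact h
    rw [hz, add_zero]
    refine Finset.sum_congr rfl fun C _ => ?_
    have hK : A + A + C = C := by rw [V.add_self, zero_add]
    rw [hK]
    linear_combination (Z A ^ 2 * W C ^ 2) * hsq A C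
  simp only [step3]
  rw [Finset.sum_mul_sum]

lemma structC_sq {𝔽 : Type*} [Field 𝔽] (ε : V → V → ℤ)
    (hval : ∀ P Q : V, P ≠ 0 → Q ≠ 0 → P ≠ Q → ε P Q = 1 ∨ ε P Q = -1) (A C : V) :
    structC 𝔽 (fun _ => 1) ε A C ^ 2 = 1 := by
  unfold structC
  split_ifs with hz hd
  · norm_num
  · norm_num
  · push_neg at hz
    rcases hval A C hz.1 hz.2 hd with h | h <;> rw [h] <;> norm_num

/-- for an oriented map `α`, `(O_F, 1, e^α)` is a composition algebra in
which every future is a line, and `(O_F, 1, −e^α)` is a composition algebra in which every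
past is a line. -/
theorem stmt_13 (𝔽 : Type*) [Field 𝔽] (hchar : (2 : 𝔽) ≠ 0)
    (α : V → V →ₗ[ZMod 2] ZMod 2) (hα : IsOrientedMap α) :
    (IsCompAlg 𝔽 (fun _ => 1) (expMap α) ∧
      ∀ P : V, P ≠ 0 → IsLine (Future (expMap α) P)) ∧
    (IsCompAlg 𝔽 (fun _ => 1) (fun P Q => -expMap α P Q) ∧
      ∀ P : V, P ≠ 0 → IsLine (Past (fun P Q => -expMap α P Q) P)) := by

  obtain ⟨h1, h2, -⟩ := hα
  have haP : ∀ P : V, P ≠ 0 → α P P = 1 := fun P hP => by simpa using h1 P hP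
  have hval : ∀ P Q : V, P ≠ 0 → Q ≠ 0 → P ≠ Q → expMap α P Q = 1 ∨ expMap α P Q = -1 := by
    intro P Q hP hQ hPQ
    rw [expMap_eq α hP hQ hPQ]; exact eSign_vals _
  have hsym : ∀ P Q : V, P ≠ 0 → Q ≠ 0 → P ≠ Q → expMap α Q P = -expMap α P Q := by
    intro P Q hP hQ hPQ
    rw [expMap_eq α hQ hP (Ne.symm hPQ), expMap_eq α hP hQ hPQ]
    exact eSign_of_add_one _ _ (by rw [add_comm]; exact h2 P Q hP hQ hPQ)
  have hline : ∀ P Q : V, P ≠ 0 → Q ≠ 0 → P ≠ Q → expMap α P (P + Q) = -expMap α P Q := by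
    intro P Q hP hQ hPQ
    have hPQ0 : P + Q ≠ 0 := fun h => hPQ (V.add_eq_zero_iff.mp h)
    have hPPQ : P ≠ P + Q := fun h => hQ (V.cancel_right h.symm)
    rw [expMap_eq α hP hPQ0 hPPQ, expMap_eq α hP hQ hPQ]
    refine eSign_of_add_one _ _ ?_
    rw [map_add, zmod2_addself, haP P hP]
  have hquad : ∀ A B C : V, A ≠ 0 → B ≠ 0 → C ≠ 0 → A ≠ B → A ≠ C → B ≠ C →
      A + B + C ≠ 0 →
      expMap α A C * expMap α B (A + B + C)
        = -(expMap α A (A + B + C) * expMap α B C) := by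
    intro A B C hA hB hC hAB hAC hBC hD0
    have hAD : A ≠ A + B + C := by
      intro h
      have hh : A + (B + C) = A := by rw [← add_assoc, ← h]
      exact hBC (V.add_eq_zero_iff.mp (V.cancel_right hh))
    have hBD : B ≠ A + B + C := by
      intro h
      have hh : B + (A + C) = B := by rw [← add_assoc, add_comm B A, ← h]
      exact hAC (V.add_eq_zero_iff.mp (V.cancel_right hh))
    rw [expMap_eq α hA hC hAC, expMap_eq α hB hD0 hBD, expMap_eq α hA hD0 hAD,
      expMap_eq α hB hC hBC]
    rw [eSign_mul, eSign_mul]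
    refine eSign_of_add_one _ _ ?_
    rw [show α B (A + B + C) = α B A + α B B + α B C from by rw [map_add, map_add],
        show α A (A + B + C) = α A A + α A B + α A C from by rw [map_add, map_add]]
    exact zmod2_quad (α A B) (α B A) (α A C) (α B C) (α A A) (α B B)
      (h2 A B hA hB hAB) (haP A hA) (haP B hB)
  have hval2 : ∀ P Q : V, P ≠ 0 → Q ≠ 0 → P ≠ Q →
      -expMap α P Q = 1 ∨ -expMap α P Q = -1 := by
    intro P Q hP hQ hPQ
    rcases hval P Q hP hQ hPQ with h | h
    · right; rw [h]
    · left; rw [h]; norm_num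
  have hsym2 : ∀ P Q : V, P ≠ 0 → Q ≠ 0 → P ≠ Q →
      -expMap α Q P = -(-expMap α P Q) := by
    intro P Q hP hQ hPQ
    rw [hsym P Q hP hQ hPQ]
  have hline2 : ∀ P Q : V, P ≠ 0 → Q ≠ 0 → P ≠ Q →
      -expMap α P (P + Q) = -(-expMap α P Q) := by
    intro P Q hP hQ hPQ
    rw [hline P Q hP hQ hPQ]
  have hquad2 : ∀ A B C : V, A ≠ 0 → B ≠ 0 → C ≠ 0 → A ≠ B → A ≠ C → B ≠ C →
      A + B + C ≠ 0 →
      -expMap α A C * -expMap α B (A + B + C)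
        = -(-expMap α A (A + B + C) * -expMap α B C) := by
    intro A B C hA hB hC hAB hAC hBC hD0
    linear_combination hquad A B C hA hB hC hAB hAC hBC hD0
  have futureline : ∀ P : V, P ≠ 0 →
      IsLine {Q : V | Q ≠ 0 ∧ Q ≠ P ∧ expMap α P Q = 1} := by
    intro P hP
    obtain ⟨b, hbdef⟩ : ∃ b : Fin 3 → ZMod 2,
        b = fun i => α P (fun j => if i = j then 1 else 0) := ⟨_, rfl⟩
    have hb : ∀ Q : V, α P Q = Q 0 * b 0 + Q 1 * b 1 + Q 2 * b 2 := by
      intro Q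
      rw [LinearMap.pi_apply_eq_sum_univ (α P) Q, Fin.sum_univ_three, hbdef]
      simp only [smul_eq_mul]
    have hbne : b ≠ 0 := by
      intro h
      have h1 := haP P hP
      rw [hb P, h] at h1
      simp at h1
    have hset : {Q : V | Q ≠ 0 ∧ Q ≠ P ∧ expMap α P Q = 1}
        = {Q : V | Q ≠ 0 ∧ Q 0 * b 0 + Q 1 * b 1 + Q 2 * b 2 = 0} := by
      ext Q
      simp only [Set.mem_setOf_eq]
      constructor
      · rintro ⟨hQ0, hQP, he⟩
        refine ⟨hQ0, ?_⟩
        rw [expMap_eq α hP hQ0 (Ne.symm hQP)] at he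
        rw [← hb]
        exact (eSign_eq_one_iff _).mp he
      · rintro ⟨hQ0, hk⟩
        have hαQ : α P Q = 0 := by rw [hb]; exact hk
        have hQP : Q ≠ P := by
          intro h
          rw [h, haP P hP] at hαQ
          exact one_ne_zero hαQ
        exact ⟨hQ0, hQP, by rw [expMap_eq α hP hQ0 (Ne.symm hQP)]
                            exact (eSign_eq_one_iff _).mpr hαQ⟩
    rw [hset]
    exact kernel_line b hbne
  refine ⟨⟨comp_of_star hchar (expMap α) (structC_sq (expMap α) hval)
      (star_lemma (expMap α) hval hsym hline hquad), ?_⟩,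
    ⟨comp_of_star hchar (fun P Q => -expMap α P Q)
      (structC_sq (fun P Q => -expMap α P Q) hval2)
      (star_lemma (fun P Q => -expMap α P Q) hval2 hsym2 hline2 hquad2), ?_⟩⟩
  · intro P hP
    exact futureline P hP
  · intro P hP
    have : Past (fun P Q => -expMap α P Q) P
        = {Q : V | Q ≠ 0 ∧ Q ≠ P ∧ expMap α P Q = 1} := by
      ext Q
      simp only [Past, Set.mem_setOf_eq]
      constructor
      · rintro ⟨a, b, c⟩; exact ⟨a, b, by omega⟩
      · rintro ⟨a, b, c⟩; exact ⟨a, b, by omega⟩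
    rw [this]
    exact futureline P hP
end

section
/- Let (O_F, 1, ε) be a composition algebra. (i) If the future →P is a line for every P ∈ F, then there exists a unique oriented map α with ε = e^α. (ii) If the past ←P is a line for every P ∈ F, then there exists a unique oriented map α with ε = −e^α. -/
open Finset

/- ==================== auxiliary material ==================== -/

def cross (a b : V) : V :=
  ![a 1 * b 2 + a 2 * b 1, a 2 * b 0 + a 0 * b 2, a 0 * b 1 + a 1 * b 0]

def dotL (a : V) : V →ₗ[ZMod 2] ZMod 2 where
  toFun x := a 0 * x 0 + a 1 * x 1 + a 2 * x 2
  map_add' x y := by simp [Pi.add_apply]; ring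
  map_smul' c x := by simp [Pi.smul_apply]; ring

set_option maxHeartbeats 4000000 in
set_option synthInstance.maxSize 2000 in
set_option synthInstance.maxHeartbeats 2000000 in
lemma cross_line : ∀ A B C : V, A ≠ 0 → B ≠ 0 → C ≠ 0 → A ≠ B → A ≠ C → B ≠ C →
    A + B + C = 0 → ∀ x : V, x ≠ 0 →
    ((cross A B) 0 * x 0 + (cross A B) 1 * x 1 + (cross A B) 2 * x 2 = 0 ↔
      (x = A ∨ x = B ∨ x = C)) := by decide

lemma zmod2_ne_zero : ∀ x : ZMod 2, x ≠ 0 → x = 1 := by decide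

lemma eSign_inj : ∀ x y : ZMod 2, eSign x = eSign y → x = y := by decide

lemma main_aux (ε : V → V → ℤ) (hε : IsMulFactor ε) (s : ℤ) (hs : s = 1 ∨ s = -1)
    (hl : ∀ P : V, P ≠ 0 → IsLine {Q : V | Q ≠ 0 ∧ Q ≠ P ∧ ε P Q = s}) :
    ∃! α : V → V →ₗ[ZMod 2] ZMod 2, IsOrientedMap α ∧
      ε = fun P Q => s * expMap α P Q := by
  classical
  unfold IsLine at hl
  choose A B C hA hB hC hAB hAC hBC hsum hset using hl
  set α : V → V →ₗ[ZMod 2] ZMod 2 :=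
    fun P => if h : P = 0 then 0 else dotL (cross (A P h) (B P h)) with hα
  have hs0 : s ≠ 0 := by rcases hs with h | h <;> omega
  -- key characterization
  have key : ∀ P, ∀ hP : P ≠ 0, ∀ Q : V, Q ≠ 0 → (α P Q = 0 ↔ ε P Q = s) := by
    intro P hP Q hQ
    have hmem := Set.ext_iff.mp (hset P hP) Q
    simp only [Set.mem_setOf_eq, Set.mem_insert_iff, Set.mem_singleton_iff] at hmem
    have hcl := cross_line (A P hP) (B P hP) (C P hP) (hA P hP) (hB P hP) (hC P hP)
      (hAB P hP) (hAC P hP) (hBC P hP) (hsum P hP) Q hQ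
    have hαval : α P Q = (cross (A P hP) (B P hP)) 0 * Q 0 +
        (cross (A P hP) (B P hP)) 1 * Q 1 + (cross (A P hP) (B P hP)) 2 * Q 2 := by
      simp [hα, dif_neg hP, dotL]
    rw [hαval, hcl, ← hmem]
    constructor
    · rintro ⟨-, -, h⟩; exact h
    · intro h
      refine ⟨hQ, ?_, h⟩
      intro hQP
      exact hs0 (by rw [hQP] at h; rw [← h, hε.2 P P (Or.inr (Or.inr rfl))])
  have keyPP : ∀ P : V, ∀ hP : P ≠ 0, α P P = 1 := by
    intro P hP
    apply zmod2_ne_zero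
    intro h0
    have := (key P hP P hP).mp h0
    rw [hε.2 P P (Or.inr (Or.inr rfl))] at this
    exact hs0 this.symm
  have keyNe : ∀ P Q : V, P ≠ 0 → Q ≠ 0 → P ≠ Q → ¬ ε P Q = s → α P Q = 1 ∧ ε P Q = -s := by
    intro P Q hP hQ hPQ hne
    have hv := (hε.1 P Q hP hQ hPQ).1
    have h1 : α P Q = 1 := by
      apply zmod2_ne_zero
      intro h0
      exact hne ((key P hP Q hQ).mp h0)
    refine ⟨h1, ?_⟩
    rcases hs with h | h <;> rcases hv with h' | h' <;> omega
  have horiented : IsOrientedMap α := by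
    refine ⟨?_, ?_, ?_⟩
    · intro P hP; simp [keyPP P hP]
    · intro P Q hP hQ hPQ
      by_cases hc : ε P Q = s
      · have h1 : α P Q = 0 := (key P hP Q hQ).mpr hc
        have h2 : ε Q P = -s := by rw [(hε.1 P Q hP hQ hPQ).2, hc]
        have h3 : α Q P = 1 := (keyNe Q P hQ hP (Ne.symm hPQ) (by omega)).1
        rw [h1, h3]; ring
      · have h1 : α P Q = 1 := (keyNe P Q hP hQ hPQ hc).1
        have h2 : ε Q P = s := by
          rw [(hε.1 P Q hP hQ hPQ).2, (keyNe P Q hP hQ hPQ hc).2]; ring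
        have h3 : α Q P = 0 := (key Q hQ P hP).mpr h2
        rw [h1, h3]; ring
    · simp [hα]
  have heq : ε = fun P Q => s * expMap α P Q := by
    funext P Q
    by_cases hcond : P ≠ 0 ∧ Q ≠ 0 ∧ P ≠ Q
    · obtain ⟨hP, hQ, hPQ⟩ := hcond
      rw [expMap, if_pos ⟨hP, hQ, hPQ⟩]
      by_cases hc : ε P Q = s
      · rw [hc, (key P hP Q hQ).mpr hc]; simp [eSign]
      · obtain ⟨h1, h2⟩ := keyNe P Q hP hQ hPQ hc
        rw [h2, h1]; simp [eSign]
    · rw [expMap, if_neg hcond, mul_zero]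
      apply hε.2
      by_contra hcon
      push_neg at hcon
      exact hcond ⟨hcon.1, hcon.2.1, hcon.2.2⟩
  refine ⟨α, ⟨horiented, heq⟩, ?_⟩
  rintro β ⟨⟨hb1, hb2, hb3⟩, hbe⟩
  funext P
  by_cases hP : P = 0
  · rw [hP, hb3]; simp [hα]
  · apply LinearMap.ext
    intro Q
    by_cases hQ : Q = 0
    · rw [hQ, map_zero, map_zero]
    · by_cases hPQ : Q = P
      · rw [hPQ, keyPP P hP]
        have := hb1 P hP
        simpa using this
      · have e1 : ε P Q = s * eSign (β P Q) := by
          rw [hbe]; simp [expMap, hP, hQ]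
          intro h; exact absurd h.symm hPQ
        have e2 : ε P Q = s * eSign (α P Q) := by
          rw [heq]; simp [expMap, hP, hQ]
          intro h; exact absurd h.symm hPQ
        have : eSign (β P Q) = eSign (α P Q) := by
          rcases hs with h | h <;> rw [h] at e1 e2 <;> omega
        exact eSign_inj _ _ this

/-- if `(O_F, 1, ε)` is a composition algebra then (i) if every future is a
line, `ε = e^α` for a unique oriented map `α`; (ii) if every past is a line, `ε = −e^α`
for a unique oriented map `α`. -/
theorem stmt_14 (𝔽 : Type*) [Field 𝔽] (hchar : (2 : 𝔽) ≠ 0)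
    (ε : V → V → ℤ) (hε : IsMulFactor ε)
    (hcomp : IsCompAlg 𝔽 (fun _ => 1) ε) :
    ((∀ P : V, P ≠ 0 → IsLine (Future ε P)) →
      ∃! α : V → V →ₗ[ZMod 2] ZMod 2, IsOrientedMap α ∧ ε = expMap α) ∧
    ((∀ P : V, P ≠ 0 → IsLine (Past ε P)) →
      ∃! α : V → V →ₗ[ZMod 2] ZMod 2, IsOrientedMap α ∧
        ε = fun P Q => -expMap α P Q) := by
  constructor
  · intro h
    obtain ⟨α, ⟨hor, heq⟩, huniq⟩ := main_aux ε hε 1 (Or.inl rfl) h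
    refine ⟨α, ⟨hor, by rw [heq]; funext P Q; ring⟩, ?_⟩
    intro β ⟨hb, hbe⟩
    exact huniq β ⟨hb, by rw [hbe]; funext P Q; ring⟩
  · intro h
    obtain ⟨α, ⟨hor, heq⟩, huniq⟩ := main_aux ε hε (-1) (Or.inr rfl) h
    refine ⟨α, ⟨hor, by rw [heq]; funext P Q; ring⟩, ?_⟩
    intro β ⟨hb, hbe⟩
    exact huniq β ⟨hb, by rw [hbe]; funext P Q; ring⟩
end
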